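/- arXiv:1903.01673 — 5 statements merged into one kernel-verified Lean document; each statement's English description precedes it below -/
import Mathlib

section
/- Let w be a string in the letters {1',1,2',2} and consider its lattice walk beginning at an arbitrary starting point (x_0,y_0) in ℕ×ℕ. If the starting point is shifted by (−1,0) or by (0,1) (so that the whole walk remains in ℕ×ℕ), then the endpoint of the walk shifts by either (−1,0) or (0,1). Similarly, if the starting point is shifted by (1,0) or by (0,−1), then the endpoint shifts by either (1,0) or (0,−1). -/
/-! ## Words over the shifted alphabet {1' < 1 < 2' < 2 < ...}

A letter is a pair `(i, b)` where `i ≥ 1` is the value (family) of the letter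
and `b = true` means the letter is primed (`i'`), `b = false` means it is
unprimed (`i`). -/

/-- A letter `i` or `i'`: the pair `(i, primed?)`. -/
abbrev Letter := ℕ × Bool

/-- A string: a finite sequence of letters. -/
abbrev Str := List Letter

/-- Number of occurrences of the letter `x` in the string `w`. -/
def cnt (x : Letter) (w : Str) : ℕ := w.countP (fun a => decide (a = x))

/-- The canonical form of a string: the leftmost letter of each value `i`
(primed or not) is made unprimed. -/
def canonicalize (w : Str) : Str :=
  w.mapIdx fun k a =>
    if k = w.findIdx (fun b => decide (b.1 = a.1)) then (a.1, false) else a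

/-- `v` is a representative of (the word of) `w`: they have the same canonical
form. -/
def Represents (v w : Str) : Prop := canonicalize v = canonicalize w

/-- Stembridge's statistic `m_i(j)`, for `1 ≤ j ≤ 2n` (1-indexed `j`). -/
def mStat (w : Str) (i j : ℕ) : ℕ :=
  if j ≤ w.length then cnt (i, false) (w.drop (w.length - j))
  else cnt (i, false) w + cnt (i, true) (w.take (j - w.length))

/-- Stembridge's ballotness criterion for a word (a string in canonical form).
Positions of letters are 0-indexed via `w[·]?`, whereas `j` is as in Stembridge's
1-indexed formulation: condition S1 concerns the letter `w_{n-j}` (1-indexed),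
i.e. `w[n-j-1]?`, and S2 concerns `w_{j-n+1}`, i.e. `w[j-n]?`. -/
def IsBallot (w : Str) : Prop :=
  ∀ i, 1 ≤ i → ∀ j,
    ((1 ≤ j ∧ j < w.length ∧ mStat w i j = mStat w (i + 1) j) →
      w[w.length - j - 1]? ≠ some (i + 1, false) ∧
      w[w.length - j - 1]? ≠ some (i + 1, true)) ∧
    ((w.length ≤ j ∧ j ≤ 2 * w.length ∧ mStat w i j = mStat w (i + 1) j) →
      w[j - w.length]? ≠ some (i, false) ∧
      w[j - w.length]? ≠ some (i + 1, true))

/-! ## Lattice walks for strings in the letters {1', 1, 2', 2} -/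

/-- One step of the lattice walk determined by a letter, from the point `p`.
(Here the letter values are `1` and `2`, i.e. this is for the relabelled
subword in the letters `1', 1, 2', 2`.) -/
def walkStep (p : ℤ × ℤ) (a : Letter) : ℤ × ℤ :=
  if p.1 = 0 ∨ p.2 = 0 then
    if a.1 = 1 then (p.1 + 1, p.2) else (p.1, p.2 + 1)
  else
    if a.1 = 1 then (if a.2 then (p.1 + 1, p.2) else (p.1, p.2 - 1))
    else (if a.2 then (p.1 - 1, p.2) else (p.1, p.2 + 1))

/-- Endpoint of the lattice walk of `w` starting at `p`. -/
def walkEnd (p : ℤ × ℤ) (w : Str) : ℤ × ℤ := w.foldl walkStep p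

/-- The full list of points of the lattice walk of `w` starting at `p`. -/
def walkPoints (p : ℤ × ℤ) (w : Str) : List (ℤ × ℤ) := List.scanl walkStep p w

/-- The location of the walk of `v` (started at the origin) just before the
(0-indexed) position `k`. -/
def locAt (v : Str) (k : ℕ) : ℤ × ℤ := walkEnd ((0, 0) : ℤ × ℤ) (v.take k)

/-! ## F- and E-critical substrings -/

/-- The five types of critical substrings (1F/2F/3F/4F/5F, resp. 1E/…/5E). -/
inductive FType | t1 | t2 | t3 | t4 | t5
  deriving DecidableEq

/-- `FCriticalAt v k l ty`: positions `k ≤ l` (0-indexed) of the string `v`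
form an F-critical substring of type `ty`.  The location conditions are on the
walk point just before position `k` of `v`'s walk from the origin; the step
directions recorded in the defining table are automatic consequences of the
location conditions and are therefore omitted. -/
def FCriticalAt (v : Str) (k l : ℕ) (ty : FType) : Prop :=
  l < v.length ∧
  match ty with
  | FType.t1 =>
      k < l ∧ v[k]? = some (1, false) ∧
      (∀ m, k < m → m < l → v[m]? = some (1, true)) ∧
      v[l]? = some (2, true) ∧
      ((locAt v k).2 = 0 ∨ ((locAt v k).2 = 1 ∧ 1 ≤ (locAt v k).1))
  | FType.t2 =>
      k < l ∧ v[k]? = some (1, false) ∧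
      (∀ m, k < m → m < l → v[m]? = some (2, false)) ∧
      v[l]? = some (1, true) ∧
      ((locAt v k).1 = 0 ∨ ((locAt v k).1 = 1 ∧ 1 ≤ (locAt v k).2))
  | FType.t3 => k = l ∧ v[k]? = some (1, false) ∧ (locAt v k).2 = 0
  | FType.t4 => k = l ∧ v[k]? = some (1, true) ∧ (locAt v k).1 = 0
  | FType.t5 =>
      k = l ∧ (v[k]? = some (1, false) ∨ v[k]? = some (2, true)) ∧
      (locAt v k).1 = 1 ∧ 1 ≤ (locAt v k).2

/-- The transformation applied to an F-critical substring of type `ty` at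
positions `k ≤ l`. -/
def FTransform (v : Str) (k l : ℕ) (ty : FType) : Str :=
  match ty with
  | FType.t1 => (v.set k (2, true)).set l (2, false)
  | FType.t2 => (v.set k (2, true)).set l (1, false)
  | FType.t3 => v.set k (2, false)
  | FType.t4 => v.set k (2, true)
  | FType.t5 => v

/-- `ECriticalAt v k l ty`: positions `k ≤ l` of `v` form an E-critical
substring of type `ty` (types 1E–5E). -/
def ECriticalAt (v : Str) (k l : ℕ) (ty : FType) : Prop :=
  l < v.length ∧
  match ty with
  | FType.t1 =>
      k < l ∧ v[k]? = some (2, true) ∧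
      (∀ m, k < m → m < l → v[m]? = some (2, false)) ∧
      v[l]? = some (1, false) ∧
      ((locAt v k).1 = 0 ∨ ((locAt v k).1 = 1 ∧ 1 ≤ (locAt v k).2))
  | FType.t2 =>
      k < l ∧ v[k]? = some (2, true) ∧
      (∀ m, k < m → m < l → v[m]? = some (1, true)) ∧
      v[l]? = some (2, false) ∧
      ((locAt v k).2 = 0 ∨ ((locAt v k).2 = 1 ∧ 1 ≤ (locAt v k).1))
  | FType.t3 => k = l ∧ v[k]? = some (2, true) ∧ (locAt v k).1 = 0
  | FType.t4 => k = l ∧ v[k]? = some (2, false) ∧ (locAt v k).2 = 0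
  | FType.t5 =>
      k = l ∧ (v[k]? = some (1, false) ∨ v[k]? = some (2, true)) ∧
      (locAt v k).2 = 1 ∧ 1 ≤ (locAt v k).1

/-- The transformation applied to an E-critical substring of type `ty`. -/
def ETransform (v : Str) (k l : ℕ) (ty : FType) : Str :=
  match ty with
  | FType.t1 => (v.set k (1, false)).set l (1, true)
  | FType.t2 => (v.set k (1, false)).set l (2, true)
  | FType.t3 => v.set k (1, true)
  | FType.t4 => v.set k (1, false)
  | FType.t5 => v

/-! ## Subwords in the letters {i', i, (i+1)', i+1} -/

/-- The subword of `w` in the letters `i', i, (i+1)', (i+1)`, relabelled so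
that `i` plays the role of `1` and `i+1` of `2`. -/
def iSub (i : ℕ) (w : Str) : Str :=
  (w.filter fun a => decide (a.1 = i ∨ a.1 = i + 1)).map
    fun a => ((if a.1 = i then 1 else 2), a.2)

/-- The (0-indexed) positions of `w` holding letters of value `i` or `i+1`,
in increasing order. -/
def iIndices (i : ℕ) (w : Str) : List ℕ :=
  (List.range w.length).filter fun k =>
    match w[k]? with
    | some a => decide (a.1 = i ∨ a.1 = i + 1)
    | none => false

/-- The position in the subword `iSub i w` corresponding to position `p` of
`w` (where `w[p]?` has value `i` or `i+1`). -/
def subPos (i : ℕ) (w : Str) (p : ℕ) : ℕ := (iIndices i w).findIdx (fun x => x == p)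

/-- `w` is `i`-ballot: its `{i',i,(i+1)',(i+1)}`-subword is ballot. -/
def IBallot (i : ℕ) (w : Str) : Prop := IsBallot (canonicalize (iSub i w))

/-- The entry of `w` at position `p` is `i`-removable: deleting it yields an
`i`-ballot word. -/
def IRemovable (i : ℕ) (w : Str) (p : ℕ) : Prop := IBallot i (w.eraseIdx p)

/-- The entry of `w` at position `p` is removable: deleting it yields a ballot
word. -/
def Removable (w : Str) (p : ℕ) : Prop := IsBallot (canonicalize (w.eraseIdx p))

/-- `FinalFCrit i w v k l ty`: `v` is a representative of the
`{i',i,(i+1)',(i+1)}`-subword of `w`, positions `k ≤ l` of `v` form an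
F-critical substring of type `ty`, and its ending index `l` is maximal among
all F-critical substrings of all representatives (i.e. it is the final
F_i-critical substring of `w`). -/
def FinalFCrit (i : ℕ) (w v : Str) (k l : ℕ) (ty : FType) : Prop :=
  Represents v (iSub i w) ∧ FCriticalAt v k l ty ∧
  ∀ v' k' l' ty', Represents v' (iSub i w) → FCriticalAt v' k' l' ty' → l' ≤ l

/-- `F_i(w)` is defined: there is a final F_i-critical substring, of type
other than 5F. -/
def FiDefined (i : ℕ) (w : Str) : Prop :=
  ∃ v k l ty, FinalFCrit i w v k l ty ∧ ty ≠ FType.t5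

/-- Replace the `{i',i,(i+1)',(i+1)}`-subword of `w` by the string `s` (in
letters `1, 2`, relabelled back to `i, i+1`), leaving all other letters
unchanged. -/
def reinsert (i : ℕ) (w : Str) (s : Str) : Str :=
  w.mapIdx fun p a =>
    if a.1 = i ∨ a.1 = i + 1 then
      match s[subPos i w p]? with
      | some b => ((if b.1 = 1 then i else i + 1), b.2)
      | none => a
    else a

/-- `FinalECrit s v k l ty`: the analogue of `FinalFCrit` for E-critical
substrings, for a string `s` in letters `1,2`. -/
def FinalECrit (s v : Str) (k l : ℕ) (ty : FType) : Prop :=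
  Represents v s ∧ ECriticalAt v k l ty ∧
  ∀ v' k' l' ty', Represents v' s → ECriticalAt v' k' l' ty' → l' ≤ l

/-- `E_i(w)` is defined. -/
def EiDefined (i : ℕ) (w : Str) : Prop :=
  ∃ v k l ty, FinalECrit (iSub i w) v k l ty ∧ ty ≠ FType.t5

/-! ## Standardization order -/

/-- Encoding of a letter respecting the order `1' < 1 < 2' < 2 < ⋯`. -/
def encL (a : Letter) : ℕ := 2 * a.1 - (if a.2 then 1 else 0)

/-- `stdLE w k l`: position `k` of `w` weakly precedes position `l` in
standardization order (ties among equal unprimed letters broken left to right,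
among equal primed letters right to left). -/
def stdLE (w : Str) (k l : ℕ) : Prop :=
  k = l ∨
  match w[k]?, w[l]? with
  | some a, some b =>
      encL a < encL b ∨
      (a = b ∧ ((a.2 = false ∧ k < l) ∨ (a.2 = true ∧ l < k)))
  | _, _ => False

/-- Strict standardization order. -/
def stdLT (w : Str) (k l : ℕ) : Prop := stdLE w k l ∧ k ≠ l

/-- Positions `k`, `l` are adjacent (in this order) in standardization order:
no position of `w` lies strictly between them. -/
def stdAdjacent (w : Str) (k l : ℕ) : Prop :=
  stdLT w k l ∧ ∀ m, m < w.length → ¬(stdLT w k m ∧ stdLT w m l)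

/-- Positions `k` and `l` are consecutive in standardization order. -/
def StdConsecutive (w : Str) (k l : ℕ) : Prop := stdAdjacent w k l ∨ stdAdjacent w l k

open Classical in
/-- The (subword) position of the lower break point of an `i`-ballot word,
given the final F_i-critical substring at positions `k ≤ l` of the subword
representative `v`, of type `ty`: it is `w_a` (position `k`) if `ty = 2F` and
`w_a` is adjacent in standardization order to `w_j`, and `w_j` otherwise
(`w_j` being the first letter for types 1F/3F and the last for 2F/4F). -/
noncomputable def lowerBreakPos (v : Str) (k l : ℕ) (ty : FType) : ℕ :=
  if ty = FType.t2 ∧ StdConsecutive v k l then k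
  else if ty = FType.t1 ∨ ty = FType.t3 then k else l

open Classical in
/-- The (subword) position of the upper break point of `v = F_i(w)`, given
the final F_i-critical substring of `w` at positions `k ≤ l`, of type `ty`,
and `t` the transformed subword representative: it is `v_a` (position `k`) if
`ty = 1F` and `v_a` is adjacent in standardization order to `v_j`, and `v_j`
otherwise (`v_j` being the last letter for types 1F/3F and the first for
2F/4F). -/
noncomputable def upperBreakPos (t : Str) (k l : ℕ) (ty : FType) : ℕ :=
  if ty = FType.t1 ∧ StdConsecutive t k l then k
  else if ty = FType.t1 ∨ ty = FType.t3 then l else k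

/-! ## The coplactic operators E' and F' via standardization -/

/-- Two strings have the same standardization. -/
def SameStd (w v : Str) : Prop :=
  w.length = v.length ∧ ∀ k l, stdLE w k l ↔ stdLE v k l

/-- Number of letters of `w` of value (gene family) `i`, primed or not. -/
def famCount (i : ℕ) (w : Str) : ℕ := w.countP fun a => decide (a.1 = i)

/-- `EPrimeSpec w v`: `v` is a word (in the letters `1',1,2',2`) with the same
standardization as `w` and weight `wt(w) + (1,-1)`; i.e. `v = E'(w)`. -/
def EPrimeSpec (w v : Str) : Prop :=
  canonicalize v = v ∧ (∀ a ∈ v, a.1 = 1 ∨ a.1 = 2) ∧ SameStd w v ∧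
  famCount 1 v = famCount 1 w + 1 ∧ famCount 2 w = famCount 2 v + 1

/-- `FPrimeSpec w v`: `v` is a word (in the letters `1',1,2',2`) with the same
standardization as `w` and weight `wt(w) - (1,-1)`; i.e. `v = F'(w)`. -/
def FPrimeSpec (w v : Str) : Prop :=
  canonicalize v = v ∧ (∀ a ∈ v, a.1 = 1 ∨ a.1 = 2) ∧ SameStd w v ∧
  famCount 1 w = famCount 1 v + 1 ∧ famCount 2 v = famCount 2 w + 1

/-- `E_i'(w)` is defined. -/
def EiPrimeDefined (i : ℕ) (w : Str) : Prop :=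
  ∃ v, EPrimeSpec (canonicalize (iSub i w)) v

/-- `u = F(w)` for words in the letters `1',1,2',2`: some representative of
`w` carries the final F-critical substring, of type other than 5F, and `u` is
the canonical form of the result of transforming it. -/
def FRel (w u : Str) : Prop :=
  ∃ v k l ty, Represents v w ∧ FCriticalAt v k l ty ∧
    (∀ v' k' l' ty', Represents v' w → FCriticalAt v' k' l' ty' → l' ≤ l) ∧
    ty ≠ FType.t5 ∧ u = canonicalize (FTransform v k l ty)

/-- `u = E(w)` for words in the letters `1',1,2',2`. -/
def ERel (w u : Str) : Prop :=
  ∃ v k l ty, Represents v w ∧ ECriticalAt v k l ty ∧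
    (∀ v' k' l' ty', Represents v' w → ECriticalAt v' k' l' ty' → l' ≤ l) ∧
    ty ≠ FType.t5 ∧ u = canonicalize (ETransform v k l ty)

/-- All points of the lattice walk of `w` starting at `p` lie in ℕ×ℕ (the
first quadrant). -/
def WalkInFirstQuadrant (p : ℤ × ℤ) (w : Str) : Prop :=
  ∀ q ∈ walkPoints p w, 0 ≤ q.1 ∧ 0 ≤ q.2

/-! Both walks stay in ℕ×ℕ, and there a single step of the walk preserves the relation
"`p'` is `p` shifted by `(-1,0)` or `(0,1)`": this is a finite check on the letter and on
which of the two points lie on an axis. Induction along the string carries the relation to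
the endpoints; shifts by `(1,0)` or `(0,-1)` are the same relation with the walks exchanged. -/

def IsNWShift (p p' : ℤ × ℤ) : Prop :=
  p' = p + ((-1, 0) : ℤ × ℤ) ∨ p' = p + ((0, 1) : ℤ × ℤ)

lemma isNWShift_flip_iff {p p' : ℤ × ℤ} :
    IsNWShift p' p ↔ p' = p + ((1, 0) : ℤ × ℤ) ∨ p' = p + ((0, -1) : ℤ × ℤ) := by
  obtain ⟨x, y⟩ := p
  obtain ⟨x', y'⟩ := p'
  simp only [IsNWShift, Prod.ext_iff, Prod.mk_add_mk]
  omega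

lemma walkInFirstQuadrant_cons {p : ℤ × ℤ} {a : Letter} {w : Str} :
    WalkInFirstQuadrant p (a :: w) ↔
      (0 ≤ p.1 ∧ 0 ≤ p.2) ∧ WalkInFirstQuadrant (walkStep p a) w := by
  simp [WalkInFirstQuadrant, walkPoints, List.scanl_cons]

lemma IsNWShift.walkStep {p p' : ℤ × ℤ} (a : Letter)
    (hp : 0 ≤ p.1 ∧ 0 ≤ p.2) (hp' : 0 ≤ p'.1 ∧ 0 ≤ p'.2) (h : IsNWShift p p') :
    IsNWShift (walkStep p a) (walkStep p' a) := by
  obtain ⟨x, y⟩ := p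
  obtain ⟨x', y'⟩ := p'
  obtain ⟨_, b⟩ := a
  simp only [IsNWShift, Prod.ext_iff, Prod.mk_add_mk] at h ⊢
  simp only [_root_.walkStep]
  cases b <;> split_ifs <;> simp only [Prod.mk_add_mk] <;> omega

lemma IsNWShift.walkEnd {p p' : ℤ × ℤ} {w : Str} (hp : WalkInFirstQuadrant p w)
    (hp' : WalkInFirstQuadrant p' w) (h : IsNWShift p p') :
    IsNWShift (walkEnd p w) (walkEnd p' w) := by
  induction w generalizing p p' with
  | nil => exact h
  | cons a w ih =>
    rw [walkInFirstQuadrant_cons] at hp hp'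
    exact ih hp.2 hp'.2 (h.walkStep a hp.1 hp'.1)

theorem bounded_error_general (w : Str)
    (p p' : ℤ × ℤ)
    (hp : WalkInFirstQuadrant p w) (hp' : WalkInFirstQuadrant p' w) :
    ((p' = p + ((-1, 0) : ℤ × ℤ) ∨ p' = p + ((0, 1) : ℤ × ℤ)) →
      (walkEnd p' w = walkEnd p w + ((-1, 0) : ℤ × ℤ) ∨
       walkEnd p' w = walkEnd p w + ((0, 1) : ℤ × ℤ))) ∧
    ((p' = p + ((1, 0) : ℤ × ℤ) ∨ p' = p + ((0, -1) : ℤ × ℤ)) →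
      (walkEnd p' w = walkEnd p w + ((1, 0) : ℤ × ℤ) ∨
       walkEnd p' w = walkEnd p w + ((0, -1) : ℤ × ℤ))) := by
  refine ⟨IsNWShift.walkEnd hp hp', fun h => ?_⟩
  rw [← isNWShift_flip_iff] at h ⊢
  exact IsNWShift.walkEnd hp' hp h

/-- **Bounded error.** Let `w` be a string in the letters
`{1',1,2',2}` and consider its lattice walk beginning at an arbitrary starting
point `(x₀,y₀) ∈ ℕ×ℕ`.  If the starting point is shifted by `(-1,0)` or by
`(0,1)` (so that the whole walk remains in ℕ×ℕ), then the endpoint of the walk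
shifts by either `(-1,0)` or `(0,1)`.  Similarly, if the starting point is
shifted by `(1,0)` or `(0,-1)`, then the endpoint shifts by either `(1,0)` or
`(0,-1)`. -/
theorem bounded_error (w : Str) (hletters : ∀ a ∈ w, a.1 = 1 ∨ a.1 = 2)
    (p p' : ℤ × ℤ)
    (hp : WalkInFirstQuadrant p w) (hp' : WalkInFirstQuadrant p' w) :
    ((p' = p + ((-1, 0) : ℤ × ℤ) ∨ p' = p + ((0, 1) : ℤ × ℤ)) →
      (walkEnd p' w = walkEnd p w + ((-1, 0) : ℤ × ℤ) ∨
       walkEnd p' w = walkEnd p w + ((0, 1) : ℤ × ℤ))) ∧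
    ((p' = p + ((1, 0) : ℤ × ℤ) ∨ p' = p + ((0, -1) : ℤ × ℤ)) →
      (walkEnd p' w = walkEnd p w + ((1, 0) : ℤ × ℤ) ∨
       walkEnd p' w = walkEnd p w + ((0, -1) : ℤ × ℤ))) :=
  bounded_error_general w p p' hp hp'
end

section
/- Let w be a word in the letters {1',1,2',2}. Then F'(w) can be computed as follows: if every representative of w has the property that its last letter equal to 1 occurs to the left of its last letter equal to 2', then F'(w) is undefined; if there exists a representative in which the last 1 occurs to the right of the last 2', then F'(w) is the word obtained from that representative by changing that last 1 to a 2' (and canonicalizing). Dually, E'(w) is computed as follows: if some representative has its last 2' to the right of its last 1, then E'(w) is obtained by changing that last 2' to a 1 in that representative (and canonicalizing); otherwise E'(w) is undefined. -/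
/-- Position `p` of `v` holds the last letter `1` of `v`, and this `1` lies to
the right of the last `2'` of `v` (i.e. there is no `1` and no `2'` after it). -/
def LastOneRightOfLast2p (v : Str) (p : ℕ) : Prop :=
  v[p]? = some (1, false) ∧
  ∀ q, p < q → v[q]? ≠ some (1, false) ∧ v[q]? ≠ some (2, true)

/-- Position `p` of `v` holds the last letter `2'` of `v`, and this `2'` lies
to the right of the last `1` of `v`. -/
def Last2pRightOfLastOne (v : Str) (p : ℕ) : Prop :=
  v[p]? = some (2, true) ∧
  ∀ q, p < q → v[q]? ≠ some (1, false) ∧ v[q]? ≠ some (2, true)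

section Helpers

variable {α : Type*}

theorem countP_le_ptwise (q r : α → Bool) :
    ∀ (u w : List α), u.length = w.length →
    (∀ (k : ℕ) (a b : α), u[k]? = some a → w[k]? = some b → q a = true → r b = true) →
    u.countP q ≤ w.countP r := by
  intro u
  induction u with
  | nil => intro w hl h; simp
  | cons a u ih =>
    intro w hl h
    cases w with
    | nil => simp at hl
    | cons b w =>
      simp only [List.countP_cons]
      have h0 := h 0 a b (by simp) (by simp)
      have hrec := ih w (by simpa using hl)
        (fun k a' b' h1 h2 => h (k+1) a' b' (by simpa using h1) (by simpa using h2))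
      by_cases hqa : q a = true
      · rw [h0 hqa]; simp [hqa]; omega
      · simp [hqa]; omega

theorem countP_add_one_le_ptwise (q r : α → Bool) :
    ∀ (u w : List α) (k1 : ℕ) (a1 b1 : α), u.length = w.length →
    (∀ (k : ℕ) (a b : α), u[k]? = some a → w[k]? = some b → q a = true → r b = true) →
    u[k1]? = some a1 → w[k1]? = some b1 → q a1 = false → r b1 = true →
    u.countP q + 1 ≤ w.countP r := by
  intro u
  induction u with
  | nil => intro w k1 a1 b1 hl h h1; simp at h1
  | cons a u ih =>
    intro w k1 a1 b1 hl h h1 h2 hq1 hr1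
    cases w with
    | nil => simp at hl
    | cons b w =>
      simp only [List.countP_cons]
      have hrec0 := countP_le_ptwise q r u w (by simpa using hl)
        (fun k a' b' h1 h2 => h (k+1) a' b' (by simpa using h1) (by simpa using h2))
      cases k1 with
      | zero =>
        simp only [List.getElem?_cons_zero, Option.some.injEq] at h1 h2
        subst h1; subst h2
        simp [hq1, hr1]; omega
      | succ k =>
        simp only [List.getElem?_cons_succ] at h1 h2
        have hrec := ih w k a1 b1 (by simpa using hl)
          (fun k a' b' h1 h2 => h (k+1) a' b' (by simpa using h1) (by simpa using h2))
          h1 h2 hq1 hr1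
        have h0 := h 0 a b (by simp) (by simp)
        by_cases hqa : q a = true
        · rw [h0 hqa]; simp [hqa]; omega
        · simp [hqa]; omega

theorem countP_add_two_le_ptwise (q r : α → Bool) :
    ∀ (u w : List α) (k1 k2 : ℕ) (a1 b1 a2 b2 : α), u.length = w.length →
    (∀ (k : ℕ) (a b : α), u[k]? = some a → w[k]? = some b → q a = true → r b = true) →
    k1 < k2 →
    u[k1]? = some a1 → w[k1]? = some b1 → q a1 = false → r b1 = true →
    u[k2]? = some a2 → w[k2]? = some b2 → q a2 = false → r b2 = true →
    u.countP q + 2 ≤ w.countP r := by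
  intro u
  induction u with
  | nil => intro w k1 k2 a1 b1 a2 b2 hl h hk h1; simp at h1
  | cons a u ih =>
    intro w k1 k2 a1 b1 a2 b2 hl h hk h1 h2 hq1 hr1 h3 h4 hq2 hr2
    cases w with
    | nil => simp at hl
    | cons b w =>
      simp only [List.countP_cons]
      cases k1 with
      | zero =>
        simp only [List.getElem?_cons_zero, Option.some.injEq] at h1 h2
        subst h1; subst h2
        obtain ⟨k2', rfl⟩ : ∃ k2', k2 = k2' + 1 := ⟨k2 - 1, by omega⟩
        simp only [List.getElem?_cons_succ] at h3 h4
        have hrec := countP_add_one_le_ptwise q r u w k2' a2 b2 (by simpa using hl)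
          (fun k a' b' h1 h2 => h (k+1) a' b' (by simpa using h1) (by simpa using h2))
          h3 h4 hq2 hr2
        simp [hq1, hr1]; omega
      | succ k =>
        obtain ⟨k2', rfl⟩ : ∃ k2', k2 = k2' + 1 := ⟨k2 - 1, by omega⟩
        simp only [List.getElem?_cons_succ] at h1 h2 h3 h4
        have hrec := ih w k k2' a1 b1 a2 b2 (by simpa using hl)
          (fun k a' b' h1 h2 => h (k+1) a' b' (by simpa using h1) (by simpa using h2))
          (by omega) h1 h2 hq1 hr1 h3 h4 hq2 hr2
        have h0 := h 0 a b (by simp) (by simp)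
        by_cases hqa : q a = true
        · rw [h0 hqa]; simp [hqa]; omega
        · simp [hqa]; omega

theorem countP_eq_ptwise (q r : α → Bool) (u w : List α) (hl : u.length = w.length)
    (h : ∀ (k : ℕ) (a b : α), u[k]? = some a → w[k]? = some b → (q a = r b)) :
    u.countP q = w.countP r := by
  have h1 := countP_le_ptwise q r u w hl (fun k a b ha hb hq => (h k a b ha hb) ▸ hq)
  have h2 := countP_le_ptwise r q w u hl.symm (fun k a b ha hb hq => (h k b a hb ha) ▸ hq)
  omega

theorem countP_set_ptwise (q : α → Bool) :
    ∀ (l : List α) (n : ℕ) (a b : α), l[n]? = some b →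
    (l.set n a).countP q + (if q b then 1 else 0) = l.countP q + (if q a then 1 else 0) := by
  intro l
  induction l with
  | nil => intro n a b h; simp at h
  | cons c l ih =>
    intro n a b h
    cases n with
    | zero =>
      simp only [List.getElem?_cons_zero, Option.some.injEq] at h
      subst h
      simp [List.countP_cons]; omega
    | succ n =>
      simp only [List.getElem?_cons_succ] at h
      have := ih n a b h
      simp only [List.set_cons_succ, List.countP_cons]
      omega

end Helpers

/-! ### canonicalize helpers -/

theorem canon_getElem? (w : Str) (k : ℕ) :
    (canonicalize w)[k]? = Option.map
      (fun a => if k = w.findIdx (fun b => decide (b.1 = a.1)) then (a.1, false) else a) w[k]? := by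
  simp [canonicalize, List.getElem?_mapIdx]

theorem canon_length (w : Str) : (canonicalize w).length = w.length := by
  simp [canonicalize]

theorem canon_fst (w : Str) (k : ℕ) :
    ((canonicalize w)[k]?).map Prod.fst = (w[k]?).map Prod.fst := by
  rw [canon_getElem?]
  cases h : w[k]? with
  | none => rfl
  | some a => simp only [Option.map_some]; split <;> rfl

theorem findIdx_congr_fst {x y : Str} (i : ℕ)
    (h : ∀ (k : ℕ), (x[k]?).map Prod.fst = (y[k]?).map Prod.fst) :
    x.findIdx (fun b => decide (b.1 = i)) = y.findIdx (fun b => decide (b.1 = i)) := by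
  induction x generalizing y with
  | nil =>
    cases y with
    | nil => rfl
    | cons b y => have := h 0; simp at this
  | cons a x ih =>
    cases y with
    | nil => have := h 0; simp at this
    | cons b y =>
      have h0 := h 0
      simp only [List.getElem?_cons_zero, Option.map_some] at h0
      have hab : a.1 = b.1 := by exact congrArg (fun o => o.getD 0) h0
      rw [List.findIdx_cons, List.findIdx_cons, hab,
        ih (fun k => by simpa using h (k+1))]

/-- Criterion for equality of canonicalizations. -/
theorem canon_eq_of {x y : Str}
    (hfst : ∀ (k : ℕ), (x[k]?).map Prod.fst = (y[k]?).map Prod.fst)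
    (hoff : ∀ (k : ℕ) (a b : Letter), x[k]? = some a → y[k]? = some b →
      k ≠ x.findIdx (fun c => decide (c.1 = a.1)) → a = b) :
    canonicalize x = canonicalize y := by
  apply List.ext_getElem?
  intro k
  rw [canon_getElem?, canon_getElem?]
  cases hx : x[k]? with
  | none =>
    have := hfst k
    rw [hx] at this
    cases hy : y[k]? with
    | none => rfl
    | some b => rw [hy] at this; simp at this
  | some a =>
    have hf := hfst k
    rw [hx] at hf
    cases hy : y[k]? with
    | none => rw [hy] at hf; simp at hf
    | some b =>
      rw [hy] at hf
      simp only [Option.map_some, Option.some.injEq] at hf ⊢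
      have hab : a.1 = b.1 := by simpa using hf
      have hJ : x.findIdx (fun c => decide (c.1 = a.1)) =
          y.findIdx (fun c => decide (c.1 = b.1)) := by
        rw [hab]; exact findIdx_congr_fst b.1 hfst
      by_cases hk : k = x.findIdx (fun c => decide (c.1 = a.1))
      · rw [if_pos hk, if_pos (by rw [← hJ, ← hk]), hab]
      · rw [if_neg hk, if_neg (by rw [← hJ]; exact hk), hoff k a b hx hy hk]

theorem canon_idem (x : Str) : canonicalize (canonicalize x) = canonicalize x := by
  apply canon_eq_of (fun k => canon_fst x k)
  intro k a b ha hb hk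
  rw [canon_getElem?, hb] at ha
  simp only [Option.map_some, Option.some.injEq] at ha
  have hJ : (canonicalize x).findIdx (fun c => decide (c.1 = a.1)) =
      x.findIdx (fun c => decide (c.1 = a.1)) :=
    findIdx_congr_fst a.1 (fun k => canon_fst x k)
  split at ha
  · exfalso
    apply hk
    rw [hJ, ← ha]
    simpa using ‹k = x.findIdx _›
  · exact ha.symm

theorem famCount_eq_of_fst {x y : Str} (i : ℕ)
    (hfst : ∀ (k : ℕ), (x[k]?).map Prod.fst = (y[k]?).map Prod.fst) :
    famCount i x = famCount i y := by
  unfold famCount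
  apply countP_eq_ptwise
  · -- lengths equal
    by_contra hne
    rcases Nat.lt_or_ge x.length y.length with h | h
    · have h1 : x[x.length]? = none := List.getElem?_eq_none (le_refl _)
      have h2 : ∃ b, y[x.length]? = some b := ⟨_, List.getElem?_eq_getElem h⟩
      obtain ⟨b, hb⟩ := h2
      have := hfst x.length; rw [h1, hb] at this; simp at this
    · rcases Nat.lt_or_ge y.length x.length with h' | h'
      · have h1 : y[y.length]? = none := List.getElem?_eq_none (le_refl _)
        have h2 : ∃ b, x[y.length]? = some b := ⟨_, List.getElem?_eq_getElem h'⟩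
        obtain ⟨b, hb⟩ := h2
        have := hfst y.length; rw [h1, hb] at this; simp at this
      · omega
  · intro k a b ha hb
    have := hfst k; rw [ha, hb] at this
    simp only [Option.map_some, Option.some.injEq] at this
    simp [this]

theorem famCount_canon (x : Str) (i : ℕ) : famCount i (canonicalize x) = famCount i x :=
  famCount_eq_of_fst i (fun k => canon_fst x k)

theorem canonical_at_findIdx {w : Str} (hcanon : canonicalize w = w) {i : ℕ}
    (hlt : w.findIdx (fun (b : Letter) => decide (b.1 = i)) < w.length) :
    w[w.findIdx (fun (b : Letter) => decide (b.1 = i))]? = some (i, false) := by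
  set J := w.findIdx (fun (b : Letter) => decide (b.1 = i)) with hJ
  have hget : w[J]? = some w[J] := List.getElem?_eq_getElem hlt
  have hfam : (w[J]).1 = i := by
    have := List.findIdx_getElem (w := hlt) (p := fun (b : Letter) => decide (b.1 = i))
    simpa using this
  conv_lhs => rw [← hcanon]
  rw [canon_getElem?, hget]
  simp only [Option.map_some, Option.some.injEq]
  rw [hfam, if_pos hJ]

theorem findIdx_le_of_pred {l : Str} {p : Letter → Bool} {k : ℕ} {a : Letter}
    (h : l[k]? = some a) (hp : p a = true) : l.findIdx p ≤ k := by
  by_contra hlt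
  push_neg at hlt
  obtain ⟨hk, hget⟩ := List.getElem?_eq_some_iff.mp h
  have := List.not_of_lt_findIdx hlt
  rw [hget, hp] at this
  simp at this

/-! ### stdLE helpers -/

theorem stdLE_some {w : Str} {k l : ℕ} {a b : Letter}
    (h1 : w[k]? = some a) (h2 : w[l]? = some b) :
    stdLE w k l ↔ (k = l ∨ encL a < encL b ∨
      (a = b ∧ ((a.2 = false ∧ k < l) ∨ (a.2 = true ∧ l < k)))) := by
  unfold stdLE
  rw [h1, h2]

theorem stdLE_none {w : Str} {k l : ℕ} (h : w[k]? = none ∨ w[l]? = none) :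
    stdLE w k l ↔ k = l := by
  unfold stdLE
  constructor
  · rintro (rfl | hm)
    · rfl
    · rcases h with h | h <;> rw [h] at hm <;>
        · revert hm; cases w[l]? <;> cases w[k]? <;> simp
  · rintro rfl; exact Or.inl rfl

theorem encL_eq (a : Letter) : encL a = 2 * a.1 - (if a.2 then 1 else 0) := rfl

theorem stdLT_asymm {w : Str} {k l : ℕ} (h1 : stdLT w k l) (h2 : stdLT w l k) : False := by
  obtain ⟨h1, hne⟩ := h1
  obtain ⟨h2, _⟩ := h2
  cases ha : w[k]? with
  | none => rw [(stdLE_none (Or.inl ha))] at h1; exact hne h1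
  | some a =>
    cases hb : w[l]? with
    | none => rw [(stdLE_none (Or.inr hb))] at h1; exact hne h1
    | some b =>
      rw [stdLE_some ha hb] at h1
      rw [stdLE_some hb ha] at h2
      rcases h1 with rfl | h1 | ⟨rfl, h1⟩
      · exact hne rfl
      · rcases h2 with rfl | h2 | ⟨rfl, h2⟩
        · exact hne rfl
        · omega
        · rcases h2 with ⟨_, h2⟩ | ⟨_, h2⟩ <;> omega
      · rcases h2 with h2 | h2 | ⟨-, h2⟩
        · exact hne h2.symm
        · omega
        · rcases h1 with ⟨e1, h1⟩ | ⟨e1, h1⟩ <;> rcases h2 with ⟨e2, h2⟩ | ⟨e2, h2⟩ <;>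
            first | omega | (rw [e1] at e2; cases e2)

theorem stdLT_of_fam_lt {w : Str} {k l : ℕ} {a b : Letter}
    (ha : w[k]? = some a) (hb : w[l]? = some b) (h1 : 1 ≤ a.1) (h2 : a.1 < b.1) :
    stdLT w k l := by
  have hne : k ≠ l := fun h => by rw [h, hb] at ha; cases ha; omega
  refine ⟨(stdLE_some ha hb).mpr (Or.inr (Or.inl ?_)), hne⟩
  rw [encL_eq, encL_eq]
  rcases a with ⟨i, _ | _⟩ <;> rcases b with ⟨j, _ | _⟩ <;> simp at h1 h2 ⊢ <;> omega

theorem sameStd_symm {w v : Str} (h : SameStd w v) : SameStd v w :=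
  ⟨h.1.symm, fun k l => (h.2 k l).symm⟩

theorem sameStd_trans {w v u : Str} (h1 : SameStd w v) (h2 : SameStd v u) : SameStd w u :=
  ⟨h1.1.trans h2.1, fun k l => (h1.2 k l).trans (h2.2 k l)⟩

theorem sameStd_stdLT {w v : Str} (h : SameStd w v) {k l : ℕ} (hlt : stdLT w k l) :
    stdLT v k l := ⟨(h.2 k l).mp hlt.1, hlt.2⟩

theorem stdLE_refl (x : Str) (k : ℕ) : stdLE x k k := Or.inl rfl

theorem encL_lt_iff_fam {x y : Letter} (hx : 1 ≤ x.1) (hy : 1 ≤ y.1) (hne : x.1 ≠ y.1) :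
    (encL x < encL y ↔ x.1 < y.1) := by
  rw [encL_eq, encL_eq]
  rcases x with ⟨i, _ | _⟩ <;> rcases y with ⟨j, _ | _⟩ <;> simp at hx hy hne ⊢ <;> omega

theorem std_canon (s : Str) (hfam : ∀ (k : ℕ) (a : Letter), s[k]? = some a → 1 ≤ a.1) :
    SameStd s (canonicalize s) := by
  refine ⟨(canon_length s).symm, ?_⟩
  intro k l
  by_cases hkl : k = l
  · subst hkl; exact ⟨fun _ => stdLE_refl _ _, fun _ => stdLE_refl _ _⟩
  cases ha : s[k]? with
  | none =>
    have ha' : (canonicalize s)[k]? = none := by rw [canon_getElem?, ha]; rfl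
    rw [stdLE_none (Or.inl ha), stdLE_none (Or.inl ha')]
  | some a =>
    cases hb : s[l]? with
    | none =>
      have hb' : (canonicalize s)[l]? = none := by rw [canon_getElem?, hb]; rfl
      rw [stdLE_none (Or.inr hb), stdLE_none (Or.inr hb')]
    | some b =>
      have ha' : (canonicalize s)[k]? =
          some (if k = s.findIdx (fun c => decide (c.1 = a.1)) then (a.1, false) else a) := by
        rw [canon_getElem?, ha]; rfl
      have hb' : (canonicalize s)[l]? =
          some (if l = s.findIdx (fun c => decide (c.1 = b.1)) then (b.1, false) else b) := by
        rw [canon_getElem?, hb]; rfl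
      have h1a := hfam k a ha
      have h1b := hfam l b hb
      rw [stdLE_some ha hb, stdLE_some ha' hb']
      by_cases hij : a.1 = b.1
      · have hJk : s.findIdx (fun c => decide (c.1 = a.1)) ≤ k :=
          findIdx_le_of_pred ha (by simp)
        have hJl : s.findIdx (fun c => decide (c.1 = b.1)) ≤ l :=
          findIdx_le_of_pred hb (by simp)
        obtain ⟨i, pa⟩ := a
        obtain ⟨j, pb⟩ := b
        simp only at hij h1a h1b
        subst hij
        simp only at hJk hJl ⊢
        by_cases hk : k = List.findIdx (fun c => decide (c.1 = i)) s <;>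
          by_cases hl : l = List.findIdx (fun c => decide (c.1 = i)) s
        · exact absurd (hk.trans hl.symm) hkl
        · rw [if_pos hk, if_neg hl]
          cases pa <;> cases pb <;> simp [encL_eq, Prod.ext_iff] <;> omega
        · rw [if_neg hk, if_pos hl]
          cases pa <;> cases pb <;> simp [encL_eq, Prod.ext_iff] <;> omega
        · rw [if_neg hk, if_neg hl]
      · have hab : ¬ (a = b) := fun h => hij (by rw [h])
        have hfa : (if k = s.findIdx (fun c => decide (c.1 = a.1)) then ((a.1 : ℕ), false) else a).1
            = a.1 := by split <;> rfl
        have hfb : (if l = s.findIdx (fun c => decide (c.1 = b.1)) then ((b.1 : ℕ), false) else b).1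
            = b.1 := by split <;> rfl
        have hab' : ¬ ((if k = s.findIdx (fun c => decide (c.1 = a.1)) then ((a.1 : ℕ), false) else a)
            = (if l = s.findIdx (fun c => decide (c.1 = b.1)) then ((b.1 : ℕ), false) else b)) := by
          intro h
          exact hij (by rw [← hfa, ← hfb, h])
        have hE : encL a < encL b ↔ a.1 < b.1 := encL_lt_iff_fam h1a h1b hij
        have hE' : encL (if k = s.findIdx (fun c => decide (c.1 = a.1)) then ((a.1 : ℕ), false) else a)
            < encL (if l = s.findIdx (fun c => decide (c.1 = b.1)) then ((b.1 : ℕ), false) else b)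
            ↔ a.1 < b.1 := by
          rw [encL_lt_iff_fam (by rw [hfa]; exact h1a) (by rw [hfb]; exact h1b)
            (by rw [hfa, hfb]; exact hij), hfa, hfb]
        constructor
        · rintro (h | h | ⟨h, -⟩)
          · exact Or.inl h
          · exact Or.inr (Or.inl (hE'.mpr (hE.mp h)))
          · exact absurd h hab
        · rintro (h | h | ⟨h, -⟩)
          · exact Or.inl h
          · exact Or.inr (Or.inl (hE.mpr (hE'.mp h)))
          · exact absurd h hab'

theorem sameStd_swap {v : Str} {p : ℕ}
    (hfam : ∀ (k : ℕ) (a : Letter), v[k]? = some a → a.1 = 1 ∨ a.1 = 2)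
    (hp : v[p]? = some (1, false))
    (hafter : ∀ q, p < q → v[q]? ≠ some (1, false) ∧ v[q]? ≠ some (2, true)) :
    SameStd v (v.set p (2, true)) := by
  refine ⟨(List.length_set (as := v) (i := p)).symm, ?_⟩
  intro k l
  by_cases hkl : k = l
  · subst hkl; exact ⟨fun _ => stdLE_refl _ _, fun _ => stdLE_refl _ _⟩
  have hplen : p < v.length := (List.getElem?_eq_some_iff.mp hp).1
  have hsp : (v.set p ((2 : ℕ), true))[p]? = some (2, true) := List.getElem?_set_self hplen
  by_cases hk : k = p <;> by_cases hl : l = p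
  · exact absurd (hk.trans hl.symm) hkl
  · cases hb : v[l]? with
    | none =>
      have hb' : (v.set p ((2 : ℕ), true))[l]? = none := by
        rw [List.getElem?_set_ne (fun h => hl h.symm)]; exact hb
      rw [stdLE_none (Or.inr hb), stdLE_none (Or.inr hb')]
    | some b =>
      have hk' : v[k]? = some (1, false) := by rw [hk]; exact hp
      have hsk : (v.set p ((2 : ℕ), true))[k]? = some (2, true) := by rw [hk]; exact hsp
      have hb' : (v.set p ((2 : ℕ), true))[l]? = some b := by
        rw [List.getElem?_set_ne (fun h => hl h.symm)]; exact hb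
      rw [stdLE_some hk' hb, stdLE_some hsk hb']
      obtain ⟨j, pb⟩ := b
      rcases hfam l _ hb with h2 | h2 <;> simp only at h2 <;> subst h2 <;> cases pb
      · have hlt : l < p := by
          rcases Nat.lt_or_ge p l with h | h
          · exact absurd hb (hafter l h).1
          · omega
        simp [encL_eq, Prod.ext_iff] <;> omega
      · simp [encL_eq, Prod.ext_iff] <;> omega
      · simp [encL_eq, Prod.ext_iff] <;> omega
      · have hlt : l < p := by
          rcases Nat.lt_or_ge p l with h | h
          · exact absurd hb (hafter l h).2
          · omega
        simp [encL_eq, Prod.ext_iff] <;> omega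
  · cases hb : v[k]? with
    | none =>
      have hb' : (v.set p ((2 : ℕ), true))[k]? = none := by
        rw [List.getElem?_set_ne (fun h => hk h.symm)]; exact hb
      rw [stdLE_none (Or.inl hb), stdLE_none (Or.inl hb')]
    | some b =>
      have hl' : v[l]? = some (1, false) := by rw [hl]; exact hp
      have hsl : (v.set p ((2 : ℕ), true))[l]? = some (2, true) := by rw [hl]; exact hsp
      have hb' : (v.set p ((2 : ℕ), true))[k]? = some b := by
        rw [List.getElem?_set_ne (fun h => hk h.symm)]; exact hb
      rw [stdLE_some hb hl', stdLE_some hb' hsl]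
      obtain ⟨j, pb⟩ := b
      rcases hfam k _ hb with h2 | h2 <;> simp only at h2 <;> subst h2 <;> cases pb
      · have hlt : k < p := by
          rcases Nat.lt_or_ge p k with h | h
          · exact absurd hb (hafter k h).1
          · omega
        simp [encL_eq, Prod.ext_iff] <;> omega
      · simp [encL_eq, Prod.ext_iff] <;> omega
      · simp [encL_eq, Prod.ext_iff] <;> omega
      · have hlt : k < p := by
          rcases Nat.lt_or_ge p k with h | h
          · exact absurd hb (hafter k h).2
          · omega
        simp [encL_eq, Prod.ext_iff] <;> omega
  · unfold stdLE
    rw [List.getElem?_set_ne (fun h => hk h.symm), List.getElem?_set_ne (fun h => hl h.symm)]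

/-! ### representatives -/

theorem repr_fst {v w : Str} (h : Represents v w) (k : ℕ) :
    (v[k]?).map Prod.fst = (w[k]?).map Prod.fst := by
  rw [← canon_fst v, ← canon_fst w, h]

theorem repr_fam12 {v w : Str} (h : Represents v w)
    (hletters : ∀ a ∈ w, a.1 = 1 ∨ a.1 = 2) :
    ∀ (k : ℕ) (a : Letter), v[k]? = some a → a.1 = 1 ∨ a.1 = 2 := by
  intro k a ha
  have hf := repr_fst h k
  rw [ha] at hf
  cases hw : w[k]? with
  | none => rw [hw] at hf; simp at hf
  | some b =>
    rw [hw] at hf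
    simp only [Option.map_some, Option.some.injEq] at hf
    rw [hf]
    exact hletters b (List.mem_iff_getElem?.mpr ⟨k, hw⟩)

theorem repr_fam1 {v w : Str} (h : Represents v w)
    (hletters : ∀ a ∈ w, a.1 = 1 ∨ a.1 = 2) :
    ∀ (k : ℕ) (a : Letter), v[k]? = some a → 1 ≤ a.1 := by
  intro k a ha
  rcases repr_fam12 h hletters k a ha with h' | h' <;> omega

theorem reprime' {w x : Str} (hx : canonicalize x = canonicalize w) {j i : ℕ} {b c : Bool}
    (hj : x[j]? = some (i, b))
    (hfind : x.findIdx (fun d => decide (d.1 = i)) = j) :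
    canonicalize (x.set j (i, c)) = canonicalize w := by
  rw [← hx]
  have hjlen : j < x.length := (List.getElem?_eq_some_iff.mp hj).1
  have hsj : (x.set j ((i : ℕ), c))[j]? = some (i, c) := List.getElem?_set_self hjlen
  have hfst : ∀ (k : ℕ), ((x.set j ((i : ℕ), c))[k]?).map Prod.fst = (x[k]?).map Prod.fst := by
    intro k
    by_cases hk : k = j
    · subst hk; rw [hsj, hj]; rfl
    · rw [List.getElem?_set_ne (fun h => hk h.symm)]
  apply canon_eq_of hfst
  intro k a bb ha hb hk
  by_cases hkj : k = j
  · exfalso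
    apply hk
    subst hkj
    rw [hsj] at ha
    cases ha
    rw [findIdx_congr_fst i hfst, hfind]
  · rw [List.getElem?_set_ne (fun h => hkj h.symm)] at ha
    rw [ha] at hb
    cases hb
    rfl

theorem set_self_eq {l : Str} {n : ℕ} {a : Letter} (h : l[n]? = some a) : l.set n a = l := by
  apply List.ext_getElem?
  intro m
  by_cases hm : m = n
  · subst hm; rw [List.getElem?_set_self (List.getElem?_eq_some_iff.mp h).1, h]
  · rw [List.getElem?_set_ne (fun h' => hm h'.symm)]

/-! ### Parts 2 and 3 -/

theorem part2_main {w : Str} (hcanon : canonicalize w = w)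
    (hletters : ∀ a ∈ w, a.1 = 1 ∨ a.1 = 2)
    (v : Str) (p : ℕ) (hrep : Represents v w) (hlast : LastOneRightOfLast2p v p) :
    FPrimeSpec w (canonicalize (v.set p (2, true))) := by
  obtain ⟨hp, hafter⟩ := hlast
  have hfamv := repr_fam12 hrep hletters
  have hplen : p < v.length := (List.getElem?_eq_some_iff.mp hp).1
  have hfamv' : ∀ (k : ℕ) (a : Letter), (v.set p ((2:ℕ), true))[k]? = some a →
      a.1 = 1 ∨ a.1 = 2 := by
    intro k a ha
    by_cases hk : k = p
    · subst hk
      rw [List.getElem?_set_self hplen] at ha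
      cases ha; right; rfl
    · rw [List.getElem?_set_ne (fun h => hk h.symm)] at ha
      exact hfamv k a ha
  have hwrep : canonicalize v = w := by
    have : canonicalize v = canonicalize w := hrep
    rw [this, hcanon]
  refine ⟨canon_idem _, ?_, ?_, ?_, ?_⟩
  · intro a hmem
    obtain ⟨k, hk⟩ := List.mem_iff_getElem?.mp hmem
    have hf := canon_fst (v.set p ((2:ℕ), true)) k
    rw [hk] at hf
    cases hv : (v.set p ((2:ℕ), true))[k]? with
    | none => rw [hv] at hf; simp at hf
    | some b =>
      rw [hv] at hf
      simp only [Option.map_some, Option.some.injEq] at hf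
      rw [hf]
      exact hfamv' k b hv
  · have h1 : SameStd v w := by
      have := std_canon v (fun k a ha => by rcases hfamv k a ha with h | h <;> omega)
      rwa [hwrep] at this
    have h2 : SameStd v (v.set p (2, true)) := sameStd_swap hfamv hp hafter
    have h3 : SameStd (v.set p (2, true)) (canonicalize (v.set p (2, true))) :=
      std_canon _ (fun k a ha => by rcases hfamv' k a ha with h | h <;> omega)
    exact sameStd_trans (sameStd_trans (sameStd_symm h1) h2) h3
  · have e1 : famCount 1 v = famCount 1 w := famCount_eq_of_fst 1 (repr_fst hrep)
    have e2 : famCount 1 (canonicalize (v.set p ((2:ℕ), true))) = famCount 1 (v.set p ((2:ℕ), true)) :=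
      famCount_canon _ 1
    have e3 := countP_set_ptwise (fun a : Letter => decide (a.1 = 1)) v p (2, true) (1, false) hp
    unfold famCount at *
    simp only [decide_eq_true_eq] at e3
    norm_num at e3
    omega
  · have e1 : famCount 2 v = famCount 2 w := famCount_eq_of_fst 2 (repr_fst hrep)
    have e2 : famCount 2 (canonicalize (v.set p ((2:ℕ), true))) = famCount 2 (v.set p ((2:ℕ), true)) :=
      famCount_canon _ 2
    have e3 := countP_set_ptwise (fun a : Letter => decide (a.1 = 2)) v p (2, true) (1, false) hp
    unfold famCount at *
    simp only [decide_eq_true_eq] at e3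
    norm_num at e3
    omega

theorem part3_main {w : Str} (hcanon : canonicalize w = w)
    (hletters : ∀ a ∈ w, a.1 = 1 ∨ a.1 = 2)
    (v : Str) (p : ℕ) (hrep : Represents v w) (hlast : Last2pRightOfLastOne v p) :
    EPrimeSpec w (canonicalize (v.set p (1, false))) := by
  obtain ⟨hp, hafter⟩ := hlast
  have hfamv := repr_fam12 hrep hletters
  have hplen : p < v.length := (List.getElem?_eq_some_iff.mp hp).1
  have hfamv' : ∀ (k : ℕ) (a : Letter), (v.set p ((1:ℕ), false))[k]? = some a →
      a.1 = 1 ∨ a.1 = 2 := by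
    intro k a ha
    by_cases hk : k = p
    · subst hk
      rw [List.getElem?_set_self hplen] at ha
      cases ha; left; rfl
    · rw [List.getElem?_set_ne (fun h => hk h.symm)] at ha
      exact hfamv k a ha
  have hwrep : canonicalize v = w := by
    have : canonicalize v = canonicalize w := hrep
    rw [this, hcanon]
  -- SameStd v (v.set p (1,false)) via sameStd_swap applied to v.set p (1,false)
  have hv2p : (v.set p ((1:ℕ), false))[p]? = some (1, false) := List.getElem?_set_self hplen
  have hv2after : ∀ q, p < q → (v.set p ((1:ℕ), false))[q]? ≠ some (1, false) ∧
      (v.set p ((1:ℕ), false))[q]? ≠ some (2, true) := by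
    intro q hq
    rw [List.getElem?_set_ne (by omega)]
    exact hafter q hq
  have hswap : SameStd (v.set p ((1:ℕ), false)) v := by
    have := sameStd_swap hfamv' hv2p hv2after
    rwa [List.set_set, set_self_eq hp] at this
  refine ⟨canon_idem _, ?_, ?_, ?_, ?_⟩
  · intro a hmem
    obtain ⟨k, hk⟩ := List.mem_iff_getElem?.mp hmem
    have hf := canon_fst (v.set p ((1:ℕ), false)) k
    rw [hk] at hf
    cases hv : (v.set p ((1:ℕ), false))[k]? with
    | none => rw [hv] at hf; simp at hf
    | some b =>
      rw [hv] at hf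
      simp only [Option.map_some, Option.some.injEq] at hf
      rw [hf]
      exact hfamv' k b hv
  · have h1 : SameStd v w := by
      have := std_canon v (fun k a ha => by rcases hfamv k a ha with h | h <;> omega)
      rwa [hwrep] at this
    have h3 : SameStd (v.set p (1, false)) (canonicalize (v.set p (1, false))) :=
      std_canon _ (fun k a ha => by rcases hfamv' k a ha with h | h <;> omega)
    exact sameStd_trans (sameStd_trans (sameStd_symm h1) (sameStd_symm hswap)) h3
  · have e1 : famCount 1 v = famCount 1 w := famCount_eq_of_fst 1 (repr_fst hrep)
    have e2 : famCount 1 (canonicalize (v.set p ((1:ℕ), false))) = famCount 1 (v.set p ((1:ℕ), false)) :=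
      famCount_canon _ 1
    have e3 := countP_set_ptwise (fun a : Letter => decide (a.1 = 1)) v p (1, false) (2, true) hp
    unfold famCount at *
    simp only [decide_eq_true_eq] at e3
    norm_num at e3
    omega
  · have e1 : famCount 2 v = famCount 2 w := famCount_eq_of_fst 2 (repr_fst hrep)
    have e2 : famCount 2 (canonicalize (v.set p ((1:ℕ), false))) = famCount 2 (v.set p ((1:ℕ), false)) :=
      famCount_canon _ 2
    have e3 := countP_set_ptwise (fun a : Letter => decide (a.1 = 2)) v p (1, false) (2, true) hp
    unfold famCount at *
    simp only [decide_eq_true_eq] at e3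
    norm_num at e3
    omega

/-! ### Part 1 -/

theorem part1_main {w : Str} (hcanon : canonicalize w = w)
    (hletters : ∀ a ∈ w, a.1 = 1 ∨ a.1 = 2)
    (hyp : ∀ v, Represents v w → ∀ p : ℕ, v[p]? = some (1, false) →
      ∃ q, p < q ∧ v[q]? = some (2, true)) :
    ¬ ∃ u, FPrimeSpec w u := by
  rintro ⟨u, hucan, hufam, ⟨hlen, hstd⟩, hc1, hc2⟩
  have hSS : SameStd w u := ⟨hlen, hstd⟩
  have hfamw : ∀ (k : ℕ) (a : Letter), w[k]? = some a → a.1 = 1 ∨ a.1 = 2 :=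
    fun k a ha => hletters a (List.mem_iff_getElem?.mpr ⟨k, ha⟩)
  have hfamu : ∀ (k : ℕ) (a : Letter), u[k]? = some a → a.1 = 1 ∨ a.1 = 2 :=
    fun k a ha => hufam a (List.mem_iff_getElem?.mpr ⟨k, ha⟩)
  have uget : ∀ k, k < w.length → ∃ c, u[k]? = some c := by
    intro k hk
    have hk' : k < u.length := by omega
    exact ⟨u[k], List.getElem?_eq_getElem hk'⟩
  have wget : ∀ k, k < w.length → ∃ c, w[k]? = some c := by
    intro k hk
    exact ⟨w[k], List.getElem?_eq_getElem hk⟩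
  -- a (1,false) exists in w
  have hpos : 0 < famCount 1 w := by omega
  have hex1 : ∃ (k : ℕ) (a : Letter), w[k]? = some a ∧ a.1 = 1 := by
    unfold famCount at hpos
    rw [List.countP_pos_iff] at hpos
    obtain ⟨a, hm, ha⟩ := hpos
    obtain ⟨k, hk⟩ := List.mem_iff_getElem?.mp hm
    exact ⟨k, a, hk, by simpa using ha⟩
  obtain ⟨k0, a0, hk0, ha0⟩ := hex1
  have hJ1len : w.findIdx (fun b => decide (b.1 = 1)) < w.length :=
    lt_of_le_of_lt (findIdx_le_of_pred hk0 (by simp [ha0])) (List.getElem?_eq_some_iff.mp hk0).1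
  have hJ1 : w[w.findIdx (fun (b : Letter) => decide (b.1 = 1))]? = some (1, false) :=
    canonical_at_findIdx hcanon hJ1len
  -- p : rightmost (1,false) of w
  set p := Nat.findGreatest (fun k => w[k]? = some (1, false)) w.length with hpdef
  have hpP : w[p]? = some (1, false) :=
    Nat.findGreatest_spec (P := fun k => w[k]? = some (1, false)) (le_of_lt hJ1len) hJ1
  have hplen : p < w.length := (List.getElem?_eq_some_iff.mp hpP).1
  have hpmax : ∀ x, p < x → w[x]? ≠ some (1, false) := by
    intro x hx h
    have hxlen : x < w.length := (List.getElem?_eq_some_iff.mp h).1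
    exact Nat.findGreatest_is_greatest (P := fun k => w[k]? = some (1, false)) hx (le_of_lt hxlen) h
  -- EX
  have hEX : ∃ (z : ℕ) (az cz : Letter), w[z]? = some az ∧ u[z]? = some cz ∧
      az.1 = 1 ∧ cz.1 = 2 := by
    by_contra hno
    push_neg at hno
    have hle : w.countP (fun a => decide (a.1 = 1)) ≤ u.countP (fun a => decide (a.1 = 1)) := by
      apply countP_le_ptwise _ _ w u hlen
      intro k a b ha hb hq
      simp only [decide_eq_true_eq] at hq ⊢
      rcases hfamu k b hb with h | h
      · exact h
      · exact absurd h (hno k a b ha hb hq)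
    unfold famCount at hc1
    omega
  -- Fact A
  have factA : ∀ (k : ℕ) (a c : Letter), w[k]? = some a → u[k]? = some c →
      a.1 = 2 → c.1 = 2 := by
    intro k a c ha hc ha2
    by_contra hcne
    have hc1' : c.1 = 1 := by rcases hfamu k c hc with h | h; exact h; exact absurd h hcne
    obtain ⟨z, az, cz, hz, huz, haz, hcz⟩ := hEX
    have s1 : stdLT w z k := stdLT_of_fam_lt hz ha (by omega) (by omega)
    have s2 : stdLT u k z := stdLT_of_fam_lt hc huz (by omega) (by omega)
    exact stdLT_asymm (sameStd_stdLT hSS s1) s2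
  -- max family-1 property of p
  have maxfam1 : ∀ (z : ℕ) (az : Letter), z ≠ p → w[z]? = some az → az.1 = 1 →
      stdLT w z p := by
    intro z az hzp hz h1
    refine ⟨(stdLE_some hz hpP).mpr ?_, hzp⟩
    obtain ⟨i, pz⟩ := az
    simp only at h1
    subst h1
    cases pz
    · have hzlt : z < p := by
        rcases Nat.lt_or_ge p z with h | h
        · exact absurd hz (hpmax z h)
        · omega
      exact Or.inr (Or.inr ⟨rfl, Or.inl ⟨rfl, hzlt⟩⟩)
    · exact Or.inr (Or.inl (by simp [encL_eq]))
  -- Fact B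
  have factB : ∀ (c : Letter), u[p]? = some c → c.1 = 2 := by
    intro c hc
    by_contra hcne
    have hc1' : c.1 = 1 := by rcases hfamu p c hc with h | h; exact h; exact absurd h hcne
    obtain ⟨z, az, cz, hz, huz, haz, hcz⟩ := hEX
    have hzp : z ≠ p := by
      intro h; subst h; rw [huz] at hc; cases hc; omega
    have s1 : stdLT w z p := maxfam1 z az hzp hz haz
    have s2 : stdLT u p z := stdLT_of_fam_lt hc huz (by omega) (by omega)
    exact stdLT_asymm (sameStd_stdLT hSS s1) s2
  -- Fact C
  have factC : ∀ (x : ℕ) (ax cx : Letter), x ≠ p → w[x]? = some ax → u[x]? = some cx →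
      ax.1 = 1 → cx.1 = 1 := by
    intro x ax cx hxp hx hux h1
    by_contra hcne
    have hcx2 : cx.1 = 2 := by rcases hfamu x cx hux with h | h; exact absurd h hcne; exact h
    obtain ⟨cp, hup⟩ := uget p hplen
    have hcp2 : cp.1 = 2 := factB cp hup
    have hptw : ∀ (k : ℕ) (a b : Letter), u[k]? = some a → w[k]? = some b →
        decide (a.1 = 1) = true → decide (b.1 = 1) = true := by
      intro k a b ha hb hq
      simp only [decide_eq_true_eq] at hq ⊢
      by_contra hb1
      have hb2 : b.1 = 2 := by rcases hfamw k b hb with h | h; exact absurd h hb1; exact h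
      have := factA k b a hb ha hb2
      omega
    have hqx : decide (cx.1 = 1) = false := by simp [hcx2]
    have hqp : decide (cp.1 = 1) = false := by simp [hcp2]
    have hrx : decide (ax.1 = 1) = true := by simp [h1]
    rcases Nat.lt_or_ge x p with hlt | hge
    · have := countP_add_two_le_ptwise (fun a : Letter => decide (a.1 = 1))
        (fun a : Letter => decide (a.1 = 1)) u w x p cx ax cp (1, false)
        hlen.symm hptw hlt hux hx hqx hrx hup hpP hqp (by simp)
      unfold famCount at hc1
      omega
    · have hplt : p < x := by omega
      have := countP_add_two_le_ptwise (fun a : Letter => decide (a.1 = 1))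
        (fun a : Letter => decide (a.1 = 1)) u w p x cp (1, false) cx ax
        hlen.symm hptw hplt hup hpP hqp (by simp) hux hx hqx hrx
      unfold famCount at hc1
      omega
  -- Fact D : no (2,true) in u after p
  have factD : ∀ (x : ℕ), p < x → u[x]? ≠ some (2, true) := by
    intro x hx hux
    have hxlen : x < w.length := by
      have := (List.getElem?_eq_some_iff.mp hux).1
      omega
    obtain ⟨cp, hup⟩ := uget p hplen
    have hcp2 : cp.1 = 2 := factB cp hup
    have s1 : stdLT u x p := by
      refine ⟨(stdLE_some hux hup).mpr ?_, by omega⟩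
      obtain ⟨i, pc⟩ := cp
      simp only at hcp2
      subst hcp2
      cases pc
      · exact Or.inr (Or.inl (by simp [encL_eq]))
      · exact Or.inr (Or.inr ⟨rfl, Or.inr ⟨rfl, hx⟩⟩)
    have s1w : stdLT w x p := sameStd_stdLT (sameStd_symm hSS) s1
    obtain ⟨ax, hax⟩ := wget x hxlen
    rcases hfamw x ax hax with h1 | h2
    · have := factC x ax (2, true) (by omega) hax hux h1
      simp at this
    · have s3 : stdLT w p x := stdLT_of_fam_lt hpP hax (by simp) (by simp [h2])
      exact stdLT_asymm s1w s3
  -- endgame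
  obtain ⟨q, hpq, hq⟩ := hyp w rfl p hpP
  have hqlen : q < w.length := (List.getElem?_eq_some_iff.mp hq).1
  set r := Nat.findGreatest (fun k => w[k]? = some (2, true)) w.length with hrdef
  have hrP : w[r]? = some (2, true) := Nat.findGreatest_spec (P := fun k => w[k]? = some (2, true)) (le_of_lt hqlen) hq
  have hqr : q ≤ r := Nat.le_findGreatest (P := fun k => w[k]? = some (2, true)) (le_of_lt hqlen) hq
  have hrlen : r < w.length := (List.getElem?_eq_some_iff.mp hrP).1
  set s := w.findIdx (fun (b : Letter) => decide (b.1 = 2)) with hsdef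
  have hsr : s ≤ r := findIdx_le_of_pred hrP (by simp)
  have hslen : s < w.length := lt_of_le_of_lt hsr hrlen
  have hsP : w[s]? = some (2, false) := canonical_at_findIdx hcanon hslen
  have hsner : s ≠ r := by
    intro h; rw [h, hrP] at hsP; simp at hsP
  have hslt : s < r := by omega
  have swrs : stdLT w r s :=
    ⟨(stdLE_some hrP hsP).mpr (Or.inr (Or.inl (by simp [encL_eq]))), fun h => hsner h.symm⟩
  have surs : stdLT u r s := sameStd_stdLT hSS swrs
  obtain ⟨cr, hur⟩ := uget r hrlen
  have hcr2 : cr.1 = 2 := factA r _ cr hrP hur rfl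
  have hcrval : cr = (2, false) := by
    obtain ⟨i, pc⟩ := cr
    simp only at hcr2
    subst hcr2
    cases pc
    · rfl
    · exact absurd hur (factD r (lt_of_lt_of_le hpq hqr))
  obtain ⟨cs, hus⟩ := uget s hslen
  have hcs2 : cs.1 = 2 := factA s _ cs hsP hus rfl
  have susr : stdLT u s r := by
    refine ⟨(stdLE_some hus hur).mpr ?_, by omega⟩
    rw [hcrval]
    obtain ⟨i, pc⟩ := cs
    simp only at hcs2
    subst hcs2
    cases pc
    · exact Or.inr (Or.inr ⟨rfl, Or.inl ⟨rfl, hslt⟩⟩)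
    · exact Or.inr (Or.inl (by simp [encL_eq]))
  exact stdLT_asymm surs susr

/-! ### Part 4 -/

theorem set_fst {x : Str} {j i : ℕ} {b c : Bool} (hj : x[j]? = some (i, b)) :
    ∀ (k : ℕ), ((x.set j ((i : ℕ), c))[k]?).map Prod.fst = (x[k]?).map Prod.fst := by
  intro k
  by_cases hk : k = j
  · subst hk
    rw [List.getElem?_set_self (List.getElem?_eq_some_iff.mp hj).1, hj]
    rfl
  · rw [List.getElem?_set_ne (fun h => hk h.symm)]

theorem part4_main {w : Str} (hcanon : canonicalize w = w)
    (hletters : ∀ a ∈ w, a.1 = 1 ∨ a.1 = 2)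
    (hyp : ∀ v, Represents v w → ∀ p : ℕ, v[p]? = some (2, true) →
      ∃ q, p < q ∧ v[q]? = some (1, false)) :
    ¬ ∃ u, EPrimeSpec w u := by
  rintro ⟨u, hucan, hufam, ⟨hlen, hstd⟩, hc1, hc2⟩
  have hSS : SameStd w u := ⟨hlen, hstd⟩
  have hfamw : ∀ (k : ℕ) (a : Letter), w[k]? = some a → a.1 = 1 ∨ a.1 = 2 :=
    fun k a ha => hletters a (List.mem_iff_getElem?.mpr ⟨k, ha⟩)
  have hfamu : ∀ (k : ℕ) (a : Letter), u[k]? = some a → a.1 = 1 ∨ a.1 = 2 :=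
    fun k a ha => hufam a (List.mem_iff_getElem?.mpr ⟨k, ha⟩)
  have uget : ∀ k, k < w.length → ∃ c, u[k]? = some c := by
    intro k hk
    have hk' : k < u.length := by omega
    exact ⟨u[k], List.getElem?_eq_getElem hk'⟩
  have wget : ∀ k, k < w.length → ∃ c, w[k]? = some c := by
    intro k hk
    exact ⟨w[k], List.getElem?_eq_getElem hk⟩
  -- the main argument, given the minimal family-2 position p
  have main : ∀ (p : ℕ) (ap : Letter), w[p]? = some ap → ap.1 = 2 →
      (∀ (z : ℕ) (az : Letter), z ≠ p → w[z]? = some az → az.1 = 2 → stdLT w p z) →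
      (ap.2 = false → w.findIdx (fun (b : Letter) => decide (b.1 = 2)) = p) →
      (∃ q, p < q ∧ w[q]? = some (1, false)) → False := by
    intro p ap hpP hap2 minfam2 hfi ⟨q, hpq, hq⟩
    have hplen : p < w.length := (List.getElem?_eq_some_iff.mp hpP).1
    have hqlen : q < w.length := (List.getElem?_eq_some_iff.mp hq).1
    have hEX : ∃ (z : ℕ) (az cz : Letter), w[z]? = some az ∧ u[z]? = some cz ∧
        az.1 = 2 ∧ cz.1 = 1 := by
      by_contra hno
      push_neg at hno
      have hle : w.countP (fun a => decide (a.1 = 2)) ≤ u.countP (fun a => decide (a.1 = 2)) := by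
        apply countP_le_ptwise _ _ w u hlen
        intro k a b ha hb hqq
        simp only [decide_eq_true_eq] at hqq ⊢
        rcases hfamu k b hb with h | h
        · exact absurd h (hno k a b ha hb hqq)
        · exact h
      unfold famCount at hc2
      omega
    have factA : ∀ (k : ℕ) (a c : Letter), w[k]? = some a → u[k]? = some c →
        a.1 = 1 → c.1 = 1 := by
      intro k a c ha hc ha1
      by_contra hcne
      have hc2' : c.1 = 2 := by rcases hfamu k c hc with h | h; exact absurd h hcne; exact h
      obtain ⟨z, az, cz, hz, huz, haz, hcz⟩ := hEX
      have s1 : stdLT w k z := stdLT_of_fam_lt ha hz (by omega) (by omega)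
      have s2 : stdLT u z k := stdLT_of_fam_lt huz hc (by omega) (by omega)
      exact stdLT_asymm (sameStd_stdLT hSS s1) s2
    have factB : ∀ (c : Letter), u[p]? = some c → c.1 = 1 := by
      intro c hc
      by_contra hcne
      have hc2' : c.1 = 2 := by rcases hfamu p c hc with h | h; exact absurd h hcne; exact h
      obtain ⟨z, az, cz, hz, huz, haz, hcz⟩ := hEX
      have hzp : z ≠ p := by
        intro h; subst h; rw [huz] at hc; cases hc; omega
      have s1 : stdLT w p z := minfam2 z az hzp hz haz
      have s2 : stdLT u z p := stdLT_of_fam_lt huz hc (by omega) (by omega)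
      exact stdLT_asymm (sameStd_stdLT hSS s1) s2
    have factC : ∀ (x : ℕ) (ax cx : Letter), x ≠ p → w[x]? = some ax → u[x]? = some cx →
        ax.1 = 2 → cx.1 = 2 := by
      intro x ax cx hxp hx hux h2
      by_contra hcne
      have hcx1 : cx.1 = 1 := by rcases hfamu x cx hux with h | h; exact h; exact absurd h hcne
      obtain ⟨cp, hup⟩ := uget p hplen
      have hcp1 : cp.1 = 1 := factB cp hup
      have hptw : ∀ (k : ℕ) (a b : Letter), w[k]? = some a → u[k]? = some b →
          decide (a.1 = 1) = true → decide (b.1 = 1) = true := by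
        intro k a b ha hb hqq
        simp only [decide_eq_true_eq] at hqq ⊢
        exact factA k a b ha hb hqq
      have hqx : decide (ax.1 = 1) = false := by simp [h2]
      have hqp : decide (ap.1 = 1) = false := by simp [hap2]
      have hrx : decide (cx.1 = 1) = true := by simp [hcx1]
      have hrp : decide (cp.1 = 1) = true := by simp [hcp1]
      rcases Nat.lt_or_ge x p with hlt | hge
      · have := countP_add_two_le_ptwise (fun a : Letter => decide (a.1 = 1))
          (fun a : Letter => decide (a.1 = 1)) w u x p ax cx ap cp
          hlen hptw hlt hx hux hqx hrx hpP hup hqp hrp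
        unfold famCount at hc1
        omega
      · have hplt : p < x := by omega
        have := countP_add_two_le_ptwise (fun a : Letter => decide (a.1 = 1))
          (fun a : Letter => decide (a.1 = 1)) w u p x ap cp ax cx
          hlen hptw hplt hpP hup hqp hrp hx hux hqx hrx
        unfold famCount at hc1
        omega
    have factD : ∀ (x : ℕ), p < x → u[x]? ≠ some (1, false) := by
      intro x hx hux
      have hxlen : x < w.length := by
        have := (List.getElem?_eq_some_iff.mp hux).1
        omega
      obtain ⟨cp, hup⟩ := uget p hplen
      have hcp1 : cp.1 = 1 := factB cp hup
      have s1 : stdLT u p x := by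
        refine ⟨(stdLE_some hup hux).mpr ?_, by omega⟩
        obtain ⟨i, pc⟩ := cp
        simp only at hcp1
        subst hcp1
        cases pc
        · exact Or.inr (Or.inr ⟨rfl, Or.inl ⟨rfl, hx⟩⟩)
        · exact Or.inr (Or.inl (by simp [encL_eq]))
      have s1w : stdLT w p x := sameStd_stdLT (sameStd_symm hSS) s1
      obtain ⟨ax, hax⟩ := wget x hxlen
      rcases hfamw x ax hax with h1 | h2
      · have s3 : stdLT w x p := stdLT_of_fam_lt hax hpP (by omega) (by omega)
        exact stdLT_asymm s1w s3
      · have := factC x ax (1, false) (by omega) hax hux h2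
        simp at this
    -- t : rightmost (1,false) of w ; s' : leftmost family-1 of w
    set t := Nat.findGreatest (fun k => w[k]? = some (1, false)) w.length with htdef
    have htP : w[t]? = some (1, false) :=
      Nat.findGreatest_spec (P := fun k => w[k]? = some (1, false)) (le_of_lt hqlen) hq
    have hqt : q ≤ t := Nat.le_findGreatest (P := fun k => w[k]? = some (1, false))
      (le_of_lt hqlen) hq
    have htlen : t < w.length := (List.getElem?_eq_some_iff.mp htP).1
    have htmax : ∀ x, t < x → w[x]? ≠ some (1, false) := by
      intro x hx h
      have hxlen : x < w.length := (List.getElem?_eq_some_iff.mp h).1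
      exact Nat.findGreatest_is_greatest (P := fun k => w[k]? = some (1, false))
        hx (le_of_lt hxlen) h
    have hpt : p < t := by omega
    set s' := w.findIdx (fun (b : Letter) => decide (b.1 = 1)) with hsdef
    have hst : s' ≤ t := findIdx_le_of_pred htP (by simp)
    have hslen : s' < w.length := lt_of_le_of_lt hst htlen
    have hsP : w[s']? = some (1, false) := canonical_at_findIdx hcanon hslen
    by_cases hs't : s' = t
    · -- w has a unique (1,false), at position t : use a representative with none
      have huniq : ∀ k, k ≠ t → w[k]? ≠ some (1, false) := by
        intro k hk h
        rcases Nat.lt_or_ge t k with hlt | hge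
        · exact htmax k hlt h
        · have hklt : k < s' := by omega
          have hkw : k < w.length := by omega
          have hnl := List.not_of_lt_findIdx (p := fun (b : Letter) => decide (b.1 = 1))
            (xs := w) (i := k) (by omega)
          have hkv : w[k] = ((1 : ℕ), false) := by
            have := List.getElem?_eq_getElem hkw
            rw [h] at this
            exact (Option.some.injEq _ _).mp this.symm
          rw [hkv] at hnl
          simp at hnl
      have hpt' : p ≠ t := by omega
      have hset1 : canonicalize (w.set t ((1 : ℕ), true)) = canonicalize w :=
        reprime' rfl htP (by rw [← hsdef, hs't])
      obtain ⟨i, pb⟩ := ap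
      simp only at hap2
      subst hap2
      cases pb
      · -- ap = (2, false) : double reprime
        set v := (w.set t ((1 : ℕ), true)).set p ((2 : ℕ), true) with hvdef
        have hx1 : (w.set t ((1 : ℕ), true))[p]? = some (2, false) := by
          rw [List.getElem?_set_ne (fun h => hpt' h.symm)]; exact hpP
        have hfind2 : (w.set t ((1 : ℕ), true)).findIdx (fun (b : Letter) => decide (b.1 = 2)) = p := by
          rw [findIdx_congr_fst 2 (set_fst htP)]
          exact hfi rfl
        have hvcan : canonicalize v = canonicalize w := reprime' hset1 hx1 hfind2
        have hvp : v[p]? = some (2, true) := by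
          rw [hvdef]
          exact List.getElem?_set_self (by rw [List.length_set]; exact hplen)
        obtain ⟨q', hq'1, hq'2⟩ := hyp v hvcan p hvp
        have hq't : q' ≠ t := by
          intro h
          subst h
          rw [hvdef, List.getElem?_set_ne (fun h => hpt' h), List.getElem?_set_self htlen] at hq'2
          cases hq'2
        have hq'p : q' ≠ p := by omega
        rw [hvdef, List.getElem?_set_ne (fun h => hq'p h.symm),
          List.getElem?_set_ne (fun h => hq't h.symm)] at hq'2
        exact huniq q' hq't hq'2
      · -- ap = (2, true) : single reprime
        set v := w.set t ((1 : ℕ), true) with hvdef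
        have hvp : v[p]? = some (2, true) := by
          rw [hvdef, List.getElem?_set_ne (fun h => hpt' h.symm)]; exact hpP
        obtain ⟨q', hq'1, hq'2⟩ := hyp v hset1 p hvp
        have hq't : q' ≠ t := by
          intro h
          subst h
          rw [hvdef, List.getElem?_set_self htlen] at hq'2
          cases hq'2
        rw [hvdef, List.getElem?_set_ne (fun h => hq't h.symm)] at hq'2
        exact huniq q' hq't hq'2
    · -- s' < t : standard contradiction
      have hslt : s' < t := by omega
      have swst : stdLT w s' t :=
        ⟨(stdLE_some hsP htP).mpr (Or.inr (Or.inr ⟨rfl, Or.inl ⟨rfl, hslt⟩⟩)), by omega⟩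
      have sust : stdLT u s' t := sameStd_stdLT hSS swst
      obtain ⟨ct, hut⟩ := uget t htlen
      have hct1 : ct.1 = 1 := factA t _ ct htP hut rfl
      have hctval : ct = (1, true) := by
        obtain ⟨i, pc⟩ := ct
        simp only at hct1
        subst hct1
        cases pc
        · exact absurd hut (factD t hpt)
        · rfl
      obtain ⟨cs, hus⟩ := uget s' hslen
      have hcs1 : cs.1 = 1 := factA s' _ cs hsP hus rfl
      have suts : stdLT u t s' := by
        refine ⟨(stdLE_some hut hus).mpr ?_, by omega⟩
        rw [hctval]
        obtain ⟨i, pc⟩ := cs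
        simp only at hcs1
        subst hcs1
        cases pc
        · exact Or.inr (Or.inl (by simp [encL_eq]))
        · exact Or.inr (Or.inr ⟨rfl, Or.inr ⟨rfl, hslt⟩⟩)
      exact stdLT_asymm sust suts
  -- establish the hypotheses of `main` in the two cases
  have hpos2 : 0 < famCount 2 w := by omega
  have hex2 : ∃ (k : ℕ) (a : Letter), w[k]? = some a ∧ a.1 = 2 := by
    unfold famCount at hpos2
    rw [List.countP_pos_iff] at hpos2
    obtain ⟨a, hm, ha⟩ := hpos2
    obtain ⟨k, hk⟩ := List.mem_iff_getElem?.mp hm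
    exact ⟨k, a, hk, by simpa using ha⟩
  obtain ⟨k2, a2, hk2, ha2⟩ := hex2
  have hJ2len : w.findIdx (fun (b : Letter) => decide (b.1 = 2)) < w.length :=
    lt_of_le_of_lt (findIdx_le_of_pred hk2 (by simp [ha2])) (List.getElem?_eq_some_iff.mp hk2).1
  have hJ2 : w[w.findIdx (fun (b : Letter) => decide (b.1 = 2))]? = some (2, false) :=
    canonical_at_findIdx hcanon hJ2len
  rcases Classical.em (∃ k : ℕ, w[k]? = some (2, true)) with hasp | hasp
  · obtain ⟨k1, hk1⟩ := hasp
    have hk1len : k1 < w.length := (List.getElem?_eq_some_iff.mp hk1).1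
    set p := Nat.findGreatest (fun k => w[k]? = some (2, true)) w.length with hpdef
    have hpP : w[p]? = some (2, true) :=
      Nat.findGreatest_spec (P := fun k => w[k]? = some (2, true)) (le_of_lt hk1len) hk1
    have hpmax : ∀ x, p < x → w[x]? ≠ some (2, true) := by
      intro x hx h
      have hxlen : x < w.length := (List.getElem?_eq_some_iff.mp h).1
      exact Nat.findGreatest_is_greatest (P := fun k => w[k]? = some (2, true))
        hx (le_of_lt hxlen) h
    refine main p (2, true) hpP rfl ?_ (by simp) (hyp w rfl p hpP)
    intro z az hzp hz haz
    refine ⟨(stdLE_some hpP hz).mpr ?_, fun h => hzp h.symm⟩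
    obtain ⟨i, pz⟩ := az
    simp only at haz
    subst haz
    cases pz
    · exact Or.inr (Or.inl (by simp [encL_eq]))
    · have hzlt : z < p := by
        rcases Nat.lt_or_ge p z with h | h
        · exact absurd hz (hpmax z h)
        · omega
      exact Or.inr (Or.inr ⟨rfl, Or.inr ⟨rfl, hzlt⟩⟩)
  · push_neg at hasp
    set p := w.findIdx (fun (b : Letter) => decide (b.1 = 2)) with hpdef
    have hq : ∃ q, p < q ∧ w[q]? = some (1, false) := by
      have hrep : canonicalize (w.set p ((2 : ℕ), true)) = canonicalize w :=
        reprime' rfl hJ2 rfl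
      have hvp : (w.set p ((2 : ℕ), true))[p]? = some (2, true) :=
        List.getElem?_set_self hJ2len
      obtain ⟨q, hq1, hq2⟩ := hyp _ hrep p hvp
      have hqp : q ≠ p := by omega
      rw [List.getElem?_set_ne (fun h => hqp h.symm)] at hq2
      exact ⟨q, hq1, hq2⟩
    refine main p (2, false) hJ2 rfl ?_ (fun _ => rfl) hq
    intro z az hzp hz haz
    refine ⟨(stdLE_some hJ2 hz).mpr ?_, fun h => hzp h.symm⟩
    obtain ⟨i, pz⟩ := az
    simp only at haz
    subst haz
    cases pz
    · have hplt : p < z := by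
        have hle : w.findIdx (fun (b : Letter) => decide (b.1 = 2)) ≤ z :=
          findIdx_le_of_pred hz (by simp)
        omega
      exact Or.inr (Or.inr ⟨rfl, Or.inl ⟨rfl, hplt⟩⟩)
    · exact absurd hz (hasp z)

/-- **Explicit description of F' and E'.** Let `w` be a word in
the letters `{1',1,2',2}`.  If every representative of `w` has its last `1` to
the left of its last `2'`, then `F'(w)` is undefined; if some representative
has its last `1` to the right of its last `2'`, then `F'(w)` is obtained from
that representative by changing that last `1` to a `2'` (and canonicalizing).
Dually: if some representative has its last `2'` to the right of its last `1`,
then `E'(w)` is obtained by changing that `2'` to a `1` (and canonicalizing);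
otherwise `E'(w)` is undefined. -/
theorem explicit_primed_operators (w : Str)
    (hcanon : canonicalize w = w)
    (hletters : ∀ a ∈ w, a.1 = 1 ∨ a.1 = 2) :
    ((∀ v, Represents v w →
        ∀ p : ℕ, v[p]? = some (1, false) → ∃ q, p < q ∧ v[q]? = some (2, true)) →
      ¬ ∃ u, FPrimeSpec w u) ∧
    (∀ v p, Represents v w → LastOneRightOfLast2p v p →
      FPrimeSpec w (canonicalize (v.set p (2, true)))) ∧
    (∀ v p, Represents v w → Last2pRightOfLastOne v p →
      EPrimeSpec w (canonicalize (v.set p (1, false)))) ∧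
    ((∀ v, Represents v w →
        ∀ p : ℕ, v[p]? = some (2, true) → ∃ q, p < q ∧ v[q]? = some (1, false)) →
      ¬ ∃ u, EPrimeSpec w u) :=
  ⟨fun h => part1_main hcanon hletters h,
   fun v p hrep hlast => part2_main hcanon hletters v p hrep hlast,
   fun v p hrep hlast => part3_main hcanon hletters v p hrep hlast,
   fun h => part4_main hcanon hletters h⟩
end

section
/- A filling T of a shifted skew shape is semistandard (not necessarily in canonical form) if and only if its standardization std(T) is a standard shifted tableau. -/
/-- `σ` (a list of parts, largest first) is a strict partition. -/
def IsStrictPart (σ : List ℕ) : Prop :=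
  σ.Pairwise (· > ·) ∧ ∀ x ∈ σ, 0 < x

/-- Membership for the shifted Young diagram of a strict partition `σ`:
cells `(r, c)` with `1 ≤ r ≤ length σ` and `r ≤ c ≤ σ_r + r - 1`
(row `r` is shifted `r - 1` steps to the right). -/
def shiftedCells (σ : List ℕ) : Set (ℕ × ℕ) :=
  {p | 1 ≤ p.1 ∧ p.1 ≤ σ.length ∧ p.1 ≤ p.2 ∧ p.2 ≤ σ.getD (p.1 - 1) 0 + p.1 - 1}

/-- A filling `T` of the set of cells `D` is semistandard: entries weakly
increase along rows and down columns, no two equal primed letters lie in the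
same row, and no two equal unprimed letters lie in the same column. -/
def SemiStandardFilling (D : Set (ℕ × ℕ)) (T : ℕ × ℕ → Letter) : Prop :=
  (∀ p q, p ∈ D → q ∈ D → p.1 = q.1 → p.2 < q.2 → encL (T p) ≤ encL (T q)) ∧
  (∀ p q, p ∈ D → q ∈ D → p.2 = q.2 → p.1 < q.1 → encL (T p) ≤ encL (T q)) ∧
  (∀ p q, p ∈ D → q ∈ D → p.1 = q.1 → p ≠ q → ¬(T p = T q ∧ (T p).2 = true)) ∧
  (∀ p q, p ∈ D → q ∈ D → p.2 = q.2 → p ≠ q → ¬(T p = T q ∧ (T p).2 = false))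

/-- Cell `p` strictly precedes cell `q` in (row) reading order: rows are read
bottom to top, each row left to right. -/
def readBefore (p q : ℕ × ℕ) : Prop := q.1 < p.1 ∨ (p.1 = q.1 ∧ p.2 < q.2)

/-- Cell `p` strictly precedes cell `q` in the standardization order of the
filling `T`: smaller letters first, ties among equal unprimed letters broken
by reading order and ties among equal primed letters by reverse reading
order. -/
def stdBefore (T : ℕ × ℕ → Letter) (p q : ℕ × ℕ) : Prop :=
  encL (T p) < encL (T q) ∨
  (T p = T q ∧ (((T p).2 = false ∧ readBefore p q) ∨ ((T p).2 = true ∧ readBefore q p)))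

/-- The standardization `std(T)` of a filling `T` of the cells `D`: each cell
receives its rank (starting from 1) in standardization order. -/
noncomputable def stdFill (D : Set (ℕ × ℕ)) (T : ℕ × ℕ → Letter) (p : ℕ × ℕ) : ℕ :=
  1 + Set.ncard {q | q ∈ D ∧ stdBefore T q p}

/-- A filling `S` of the cells `D` by natural numbers is a standard shifted
tableau: it uses each of `1, …, |D|` exactly once and strictly increases along
rows and down columns. -/
def IsStandardFilling (D : Set (ℕ × ℕ)) (S : ℕ × ℕ → ℕ) : Prop :=
  (∀ p ∈ D, 1 ≤ S p ∧ S p ≤ Set.ncard D) ∧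
  (∀ p ∈ D, ∀ q ∈ D, p ≠ q → S p ≠ S q) ∧
  (∀ p q, p ∈ D → q ∈ D → p.1 = q.1 → p.2 < q.2 → S p < S q) ∧
  (∀ p q, p ∈ D → q ∈ D → p.2 = q.2 → p.1 < q.1 → S p < S q)

section AuxLemmas

lemma encL_injective {a b : Letter} (ha : 1 ≤ a.1) (hb : 1 ≤ b.1)
    (h : encL a = encL b) : a = b := by
  obtain ⟨a1, a2⟩ := a; obtain ⟨b1, b2⟩ := b
  simp only [encL] at h ha hb
  cases a2 <;> cases b2 <;> simp_all [Prod.mk.injEq] <;> omega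

lemma readBefore_total {p q : ℕ × ℕ} (h : p ≠ q) :
    readBefore p q ∨ readBefore q p := by
  have h' : p.1 ≠ q.1 ∨ p.2 ≠ q.2 := by
    by_contra hc
    push_neg at hc
    exact h (Prod.ext hc.1 hc.2)
  unfold readBefore
  omega

lemma readBefore_trans {p q r : ℕ × ℕ} (h1 : readBefore p q) (h2 : readBefore q r) :
    readBefore p r := by
  unfold readBefore at *; omega

lemma stdBefore_irrefl (T : ℕ × ℕ → Letter) (p : ℕ × ℕ) : ¬ stdBefore T p p := by
  simp [stdBefore, readBefore]

lemma stdBefore_trans {T : ℕ × ℕ → Letter} {p q r : ℕ × ℕ}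
    (h1 : stdBefore T p q) (h2 : stdBefore T q r) : stdBefore T p r := by
  unfold stdBefore at *
  rcases h1 with h1 | ⟨e1, h1⟩ <;> rcases h2 with h2 | ⟨e2, h2⟩
  · exact Or.inl (h1.trans h2)
  · exact Or.inl (by rw [← e2]; exact h1)
  · exact Or.inl (by rw [e1]; exact h2)
  · refine Or.inr ⟨e1.trans e2, ?_⟩
    rcases h1 with ⟨hf1, hr1⟩ | ⟨hf1, hr1⟩ <;> rcases h2 with ⟨hf2, hr2⟩ | ⟨hf2, hr2⟩
    · exact Or.inl ⟨hf1, readBefore_trans hr1 hr2⟩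
    · rw [e1, hf2] at hf1; exact absurd hf1 (by simp)
    · rw [e1, hf2] at hf1; exact absurd hf1 (by simp)
    · exact Or.inr ⟨hf1, readBefore_trans hr2 hr1⟩

lemma stdBefore_total {T : ℕ × ℕ → Letter} {p q : ℕ × ℕ}
    (hp : 1 ≤ (T p).1) (hq : 1 ≤ (T q).1) (hne : p ≠ q) :
    stdBefore T p q ∨ stdBefore T q p := by
  rcases lt_trichotomy (encL (T p)) (encL (T q)) with h | h | h
  · exact Or.inl (Or.inl h)
  · have e := encL_injective hp hq h
    rcases readBefore_total hne with hr | hr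
    · cases hb : (T p).2
      · exact Or.inl (Or.inr ⟨e, Or.inl ⟨hb, hr⟩⟩)
      · exact Or.inr (Or.inr ⟨e.symm, Or.inr ⟨by rw [← e]; exact hb, hr⟩⟩)
    · cases hb : (T p).2
      · exact Or.inr (Or.inr ⟨e.symm, Or.inl ⟨by rw [← e]; exact hb, hr⟩⟩)
      · exact Or.inl (Or.inr ⟨e, Or.inr ⟨hb, hr⟩⟩)
  · exact Or.inr (Or.inl h)

lemma shiftedCells_finite (σ : List ℕ) : (shiftedCells σ).Finite := by
  apply Set.Finite.subset
    (Set.Finite.prod (Set.finite_Icc 1 σ.length) (Set.finite_Icc 1 (σ.sum + σ.length)))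
  rintro ⟨r, c⟩ ⟨h1, h2, h3, h4⟩
  have h4' : c ≤ σ.getD (r - 1) 0 + r - 1 := h4
  have hget : σ.getD (r - 1) 0 ≤ σ.sum := by
    by_cases h : r - 1 < σ.length
    · rw [List.getD_eq_getElem σ 0 h]
      exact List.single_le_sum (fun x _ => Nat.zero_le x) _ (List.getElem_mem h)
    · rw [List.getD_eq_default σ 0 (le_of_not_gt h)]
      exact Nat.zero_le _
  exact ⟨⟨h1, h2⟩, ⟨le_trans h1 h3, by omega⟩⟩

end AuxLemmas

/-- A filling `T` of a shifted skew shape `σ/ρ` (with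
entries from the alphabet `{1' < 1 < 2' < 2 < ⋯}`) is semistandard if and only
if its standardization `std(T)` is a standard shifted tableau. -/
theorem semistandard_iff_standardization_standard
    (σ ρ : List ℕ) (hσ : IsStrictPart σ) (hρ : IsStrictPart ρ)
    (hsub : shiftedCells ρ ⊆ shiftedCells σ)
    (T : ℕ × ℕ → Letter)
    (hval : ∀ p ∈ shiftedCells σ \ shiftedCells ρ, 1 ≤ (T p).1) :
    SemiStandardFilling (shiftedCells σ \ shiftedCells ρ) T ↔
      IsStandardFilling (shiftedCells σ \ shiftedCells ρ)
        (stdFill (shiftedCells σ \ shiftedCells ρ) T) := by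
  set D := shiftedCells σ \ shiftedCells ρ with hD
  have hDfin : D.Finite := (shiftedCells_finite σ).subset Set.diff_subset
  have hfin : ∀ p, {q | q ∈ D ∧ stdBefore T q p}.Finite := fun p =>
    hDfin.subset (fun x hx => hx.1)
  have mono : ∀ p ∈ D, ∀ q, stdBefore T p q → stdFill D T p < stdFill D T q := by
    intro p hp q hpq
    unfold stdFill
    have hss : {x | x ∈ D ∧ stdBefore T x p} ⊂ {x | x ∈ D ∧ stdBefore T x q} := by
      constructor
      · rintro x ⟨hxD, hx⟩
        exact ⟨hxD, stdBefore_trans hx hpq⟩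
      · intro hsub
        exact stdBefore_irrefl T p (hsub ⟨hp, hpq⟩).2
    have := Set.ncard_lt_ncard hss (hfin q)
    omega
  have total : ∀ {p q : ℕ × ℕ}, p ∈ D → q ∈ D → p ≠ q →
      stdBefore T p q ∨ stdBefore T q p := by
    intro p q hp hq hne
    exact stdBefore_total (hval p hp) (hval q hq) hne
  have inj : ∀ p ∈ D, ∀ q ∈ D, p ≠ q → stdFill D T p ≠ stdFill D T q := by
    intro p hp q hq hne heq
    rcases total hp hq hne with h | h
    · exact absurd heq (Nat.ne_of_lt (mono p hp q h))
    · exact absurd heq.symm (Nat.ne_of_lt (mono q hq p h))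
  have reflect : ∀ p ∈ D, ∀ q ∈ D, stdFill D T p < stdFill D T q → stdBefore T p q := by
    intro p hp q hq hlt
    by_cases hne : p = q
    · subst hne; omega
    rcases total hp hq hne with h | h
    · exact h
    · exact absurd hlt (by have := mono q hq p h; omega)
  have range : ∀ p ∈ D, 1 ≤ stdFill D T p ∧ stdFill D T p ≤ D.ncard := by
    intro p hp
    refine ⟨by unfold stdFill; omega, ?_⟩
    have hss : {x | x ∈ D ∧ stdBefore T x p} ⊂ D := by
      constructor
      · exact fun x hx => hx.1
      · intro hsub
        exact stdBefore_irrefl T p (hsub hp).2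
    have := Set.ncard_lt_ncard hss hDfin
    unfold stdFill; omega
  constructor
  · rintro ⟨hrow, hcol, hrowp, hcolp⟩
    refine ⟨range, inj, ?_, ?_⟩
    · intro p q hp hq hr hc
      apply mono p hp q
      rcases lt_or_eq_of_le (hrow p q hp hq hr hc) with h | h
      · exact Or.inl h
      have e := encL_injective (hval p hp) (hval q hq) h
      have hne : p ≠ q := by
        intro he; subst he; exact lt_irrefl _ hc
      have hnp := hrowp p q hp hq hr hne
      have hb : (T p).2 = false := by
        cases hb : (T p).2
        · rfl
        · exact absurd ⟨e, hb⟩ hnp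
      exact Or.inr ⟨e, Or.inl ⟨hb, Or.inr ⟨hr, hc⟩⟩⟩
    · intro p q hp hq hc hr
      apply mono p hp q
      rcases lt_or_eq_of_le (hcol p q hp hq hc hr) with h | h
      · exact Or.inl h
      have e := encL_injective (hval p hp) (hval q hq) h
      have hne : p ≠ q := by
        intro he; subst he; exact lt_irrefl _ hr
      have hnp := hcolp p q hp hq hc hne
      have hb : (T p).2 = true := by
        cases hb : (T p).2
        · exact absurd ⟨e, hb⟩ hnp
        · rfl
      exact Or.inr ⟨e, Or.inr ⟨hb, Or.inl hr⟩⟩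
  · rintro ⟨-, -, hrow, hcol⟩
    refine ⟨?_, ?_, ?_, ?_⟩
    · intro p q hp hq hr hc
      rcases reflect p hp q hq (hrow p q hp hq hr hc) with h | ⟨e, -⟩
      · exact le_of_lt h
      · exact le_of_eq (by rw [e])
    · intro p q hp hq hc hr
      rcases reflect p hp q hq (hcol p q hp hq hc hr) with h | ⟨e, -⟩
      · exact le_of_lt h
      · exact le_of_eq (by rw [e])
    · intro p q hp hq hr hne h
      obtain ⟨e, hb⟩ := h
      have hcc : p.2 ≠ q.2 := by
        intro h'; exact hne (Prod.ext hr h')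
      rcases lt_or_gt_of_ne hcc with hc | hc
      · rcases reflect p hp q hq (hrow p q hp hq hr hc) with h' | ⟨-, h'⟩
        · rw [e] at h'; exact lt_irrefl _ h'
        · rcases h' with ⟨hf, -⟩ | ⟨-, hr'⟩
          · rw [hb] at hf; exact absurd hf (by simp)
          · unfold readBefore at hr'; omega
      · rcases reflect q hq p hp (hrow q p hq hp hr.symm hc) with h' | ⟨-, h'⟩
        · rw [e] at h'; exact lt_irrefl _ h'
        · rcases h' with ⟨hf, -⟩ | ⟨-, hr'⟩
          · rw [← e, hb] at hf; exact absurd hf (by simp)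
          · unfold readBefore at hr'; omega
    · intro p q hp hq hc hne h
      obtain ⟨e, hb⟩ := h
      have hrr : p.1 ≠ q.1 := by
        intro h'; exact hne (Prod.ext h' hc)
      rcases lt_or_gt_of_ne hrr with hr | hr
      · rcases reflect p hp q hq (hcol p q hp hq hc hr) with h' | ⟨-, h'⟩
        · rw [e] at h'; exact lt_irrefl _ h'
        · rcases h' with ⟨-, hr'⟩ | ⟨hf, -⟩
          · unfold readBefore at hr'; omega
          · rw [hb] at hf; exact absurd hf (by simp)
      · rcases reflect q hq p hp (hcol q p hq hp hc.symm hr) with h' | ⟨-, h'⟩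
        · rw [e] at h'; exact lt_irrefl _ h'
        · rcases h' with ⟨-, hr'⟩ | ⟨hf, -⟩
          · unfold readBefore at hr'; omega
          · rw [← e, hb] at hf; exact absurd hf (by simp)
end

section
/- Let t ≥ 1 be an integer and set α = (2t+1, 2t−1, …, 7, 5, 3), β = (t+2), and γ^c = (2t+2, 2t, …, 6, 4, 2, 1). Then the number of pairs (b, T), where b is a box such that α ∪ {b} is the shifted Young diagram of a strict partition contained in γ^c, and T is a semistandard filling of the shifted skew shape γ^c/(α ∪ {b}) of weight β whose reading word is ballot, equals 2^t. -/
open Classical in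
/-- The (row) reading word of the filling `T` of the cells `D`: rows are read
from bottom to top, each row from left to right.  `B` is any bound with all
cells of `D` in rows and columns `< B + 1`. -/
noncomputable def readWord (B : ℕ) (D : Set (ℕ × ℕ)) (T : ℕ × ℕ → Letter) : List Letter :=
  ((List.range (B + 1)).reverse).flatMap fun r =>
    (List.range (B + 1)).filterMap fun c =>
      if (r, c) ∈ D then some (T (r, c)) else none

/-- The strict partition `α = (2t+1, 2t-1, …, 7, 5, 3)`. -/
def alphaOf (t : ℕ) : List ℕ := (List.range t).map fun k => 2 * t + 1 - 2 * k

/-- The strict partition `γᶜ = (2t+2, 2t, …, 6, 4, 2, 1)`. -/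
def gammacOf (t : ℕ) : List ℕ := ((List.range (t + 1)).map fun k => 2 * t + 2 - 2 * k) ++ [1]

/-- The shifted skew shape `γᶜ / (α ∪ {b})`. -/
def skewD (t : ℕ) (b : ℕ × ℕ) : Set (ℕ × ℕ) :=
  shiftedCells (gammacOf t) \ (shiftedCells (alphaOf t) ∪ {b})

lemma mem_alpha (t : ℕ) (p : ℕ × ℕ) :
    p ∈ shiftedCells (alphaOf t) ↔ 1 ≤ p.1 ∧ p.1 ≤ t ∧ p.1 ≤ p.2 ∧ p.2 + p.1 ≤ 2*t+2 := by
  have hlen : (alphaOf t).length = t := by simp [alphaOf]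
  have hg : ∀ k, k < t → (alphaOf t).getD k 0 = 2*t+1-2*k := by
    intro k h
    simp [alphaOf, List.getD_eq_getElem?_getD, List.getElem?_map, List.getElem?_range, h]
  unfold shiftedCells
  simp only [Set.mem_setOf_eq, hlen]
  constructor
  · rintro ⟨h1, h2, h3, h4⟩
    have := hg (p.1-1) (by omega)
    omega
  · rintro ⟨h1, h2, h3, h4⟩
    have := hg (p.1-1) (by omega)
    exact ⟨h1, h2, h3, by omega⟩

lemma gammac_getD (t k : ℕ) (h : k < t + 2) :
    (gammacOf t).getD k 0 = if k < t + 1 then 2*t+2-2*k else 1 := by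
  have hl : (List.map (fun k => 2*t+2-2*k) (List.range (t+1))).length = t + 1 := by simp
  rw [gammacOf, List.getD_eq_getElem?_getD, List.getElem?_append, hl]
  by_cases hk : k < t + 1
  · simp [List.getElem?_map, List.getElem?_range, hk]
  · have hk' : k = t + 1 := by omega
    simp [hk, hk']

lemma mem_gammac (t : ℕ) (p : ℕ × ℕ) :
    p ∈ shiftedCells (gammacOf t) ↔
      (1 ≤ p.1 ∧ p.1 ≤ t+1 ∧ p.1 ≤ p.2 ∧ p.2 + p.1 ≤ 2*t+3) ∨ (p.1 = t+2 ∧ p.2 = t+2) := by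
  have hlen : (gammacOf t).length = t + 2 := by simp [gammacOf]
  unfold shiftedCells
  simp only [Set.mem_setOf_eq, hlen]
  constructor
  · rintro ⟨h1, h2, h3, h4⟩
    have := gammac_getD t (p.1-1) (by omega)
    split at this <;> omega
  · intro h
    have h1 : 1 ≤ p.1 ∧ p.1 ≤ t + 2 := by omega
    have := gammac_getD t (p.1-1) (by omega)
    refine ⟨h1.1, h1.2, by omega, by split at this <;> omega⟩

lemma mem_skew (t : ℕ) (b p : ℕ × ℕ) :
    p ∈ skewD t b ↔
      ((1 ≤ p.1 ∧ p.1 ≤ t ∧ p.1 + p.2 = 2*t+3) ∨ (p.1 = t+1 ∧ p.2 = t+1) ∨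
        (p.1 = t+1 ∧ p.2 = t+2) ∨ (p.1 = t+2 ∧ p.2 = t+2)) ∧ p ≠ b := by
  simp only [skewD, Set.mem_diff, Set.mem_union, Set.mem_singleton_iff, mem_gammac, mem_alpha,
    Ne, Prod.ext_iff, not_or, not_and]
  omega
lemma mem_D0 (t : ℕ) (p : ℕ × ℕ) :
    p ∈ skewD t (t+1, t+1) ↔
      (1 ≤ p.1 ∧ p.1 ≤ t ∧ p.1 + p.2 = 2*t+3) ∨
        (p.1 = t+1 ∧ p.2 = t+2) ∨ (p.1 = t+2 ∧ p.2 = t+2) := by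
  rw [mem_skew, Ne, Prod.ext_iff]
  simp only [not_and]
  omega

lemma alphaP_getD (t k : ℕ) (h : k < t + 1) :
    (alphaOf t ++ [1]).getD k 0 = if k < t then 2*t+1-2*k else 1 := by
  have hl : (alphaOf t).length = t := by simp [alphaOf]
  rw [List.getD_eq_getElem?_getD, List.getElem?_append, hl]
  by_cases hk : k < t
  · simp [alphaOf, List.getElem?_map, List.getElem?_range, hk]
  · have hk' : k = t := by omega
    simp [hk, hk']

lemma mem_alphaP (t : ℕ) (p : ℕ × ℕ) :
    p ∈ shiftedCells (alphaOf t ++ [1]) ↔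
      (1 ≤ p.1 ∧ p.1 ≤ t ∧ p.1 ≤ p.2 ∧ p.2 + p.1 ≤ 2*t+2) ∨ (p.1 = t+1 ∧ p.2 = t+1) := by
  have hlen : (alphaOf t ++ [1]).length = t + 1 := by simp [alphaOf]
  unfold shiftedCells
  simp only [Set.mem_setOf_eq, hlen]
  constructor
  · rintro ⟨h1, h2, h3, h4⟩
    have := alphaP_getD t (p.1-1) (by omega)
    split at this <;> omega
  · intro h
    have h1 : 1 ≤ p.1 ∧ p.1 ≤ t + 1 := by omega
    have := alphaP_getD t (p.1-1) (by omega)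
    refine ⟨h1.1, h1.2, by omega, by split at this <;> omega⟩

lemma strictPart_alphaP (t : ℕ) : IsStrictPart (alphaOf t ++ [1]) := by
  constructor
  · rw [List.pairwise_iff_getElem]
    intro i j hi hj hij
    have hlen : (alphaOf t ++ [1]).length = t + 1 := by simp [alphaOf]
    rw [← List.getD_eq_getElem _ 0 hi, ← List.getD_eq_getElem _ 0 hj]
    rw [hlen] at hi hj
    rw [alphaP_getD t i (by omega), alphaP_getD t j (by omega)]
    split <;> split <;> omega
  · intro x hx
    rcases List.mem_append.1 hx with hx | hx
    · simp only [alphaOf, List.mem_map, List.mem_range] at hx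
      obtain ⟨k, hk, rfl⟩ := hx; omega
    · simp at hx; omega
lemma filterMap_single {f : ℕ → Option Letter} {l : List ℕ} {x0 : ℕ} {y : Letter}
    (h : ∀ a ∈ l, f a = if a = x0 then some y else none) :
    l.filterMap f = List.replicate (l.count x0) y := by
  induction l with
  | nil => simp
  | cons a l ih =>
    rw [List.filterMap_cons, h a (by simp)]
    by_cases hax : a = x0
    · subst hax
      simp [List.count_cons, List.replicate_succ, List.replicate_add,
        ih (fun b hb => h b (by simp [hb]))]
    · simp [hax, List.count_cons, ih (fun b hb => h b (by simp [hb]))]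

lemma flatMap_head (g : ℕ → List Letter) (r0 k : ℕ) (x : Letter)
    (hg0 : ∀ r, r0 < r → g r = []) (hgr0 : (g r0).head? = some x) :
    ((List.range (r0+1+k)).reverse.flatMap g).head? = some x := by
  induction k with
  | zero =>
    rw [List.range_succ, List.reverse_append]
    simp only [List.reverse_singleton, List.singleton_append, List.flatMap_cons,
      List.head?_append, hgr0]
    rfl
  | succ k ih =>
    rw [show r0+1+(k+1) = (r0+1+k)+1 by ring, List.range_succ, List.reverse_append]
    simp only [List.reverse_singleton, List.singleton_append, List.flatMap_cons,
      hg0 (r0+1+k) (by omega), List.nil_append]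
    exact ih

lemma readWord_head (B : ℕ) (D : Set (ℕ × ℕ)) (T : ℕ × ℕ → Letter) (r0 c0 : ℕ)
    (hr : r0 ≤ B) (hc : c0 ≤ B) (hmem : (r0, c0) ∈ D)
    (hrow : ∀ p ∈ D, p.1 ≤ r0) (hcol : ∀ p ∈ D, p.1 = r0 → p = (r0, c0)) :
    (readWord B D T).head? = some (T (r0, c0)) := by
  classical
  unfold readWord
  rw [show B + 1 = r0 + 1 + (B - r0) by omega]
  apply flatMap_head
  · intro r hr'
    rw [List.filterMap_eq_nil_iff]
    intro c hcm
    have hnm : (r, c) ∉ D := fun hm => by have := hrow _ hm; simp at this; omega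
    simp [hnm]
  · have hfm : (List.range (r0 + 1 + (B - r0))).filterMap
        (fun c => if (r0, c) ∈ D then some (T (r0, c)) else none)
        = List.replicate ((List.range (r0 + 1 + (B - r0))).count c0) (T (r0, c0)) := by
      apply filterMap_single
      intro c hcm
      by_cases hm : (r0, c) ∈ D
      · have hcc : c = c0 := by simpa using congrArg Prod.snd (hcol _ hm rfl)
        subst hcc; simp [hm]
      · have hcc : c ≠ c0 := fun h => hm (h ▸ hmem)
        simp [hm, hcc]
    rw [hfm, List.count_eq_one_of_mem List.nodup_range (by simp; omega)]
    simp

lemma mem_readWord {B : ℕ} {D : Set (ℕ × ℕ)} {T : ℕ × ℕ → Letter} {a : Letter}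
    (ha : a ∈ readWord B D T) : ∃ p ∈ D, T p = a := by
  classical
  unfold readWord at ha
  simp only [List.mem_flatMap, List.mem_filterMap, List.mem_reverse, List.mem_range] at ha
  obtain ⟨r, -, c, -, hc⟩ := ha
  by_cases h : (r, c) ∈ D
  · rw [if_pos h] at hc
    exact ⟨(r, c), h, Option.some_inj.1 hc⟩
  · rw [if_neg h] at hc; cases hc
lemma cnt_eq_zero {x : Letter} {w : Str} (h : ∀ a ∈ w, a ≠ x) : cnt x w = 0 := by
  rw [cnt, List.countP_eq_zero]
  intro a ha
  simpa using h a ha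

lemma cnt_pos {x : Letter} {w : Str} (h : x ∈ w) : 0 < cnt x w := by
  rw [cnt, List.countP_pos_iff]
  exact ⟨x, h, by simp⟩

lemma isBallot_of (w : Str) (hall : ∀ a ∈ w, a.1 = 1) (hhead : w.head? = some (1, false)) :
    IsBallot w := by
  have hmem : ((1, false) : Letter) ∈ w := by
    cases w with
    | nil => simp at hhead
    | cons a w' => simp_all
  have hval2 : ∀ i : ℕ, 2 ≤ i → ∀ pr : Bool, ∀ u : List Letter,
      (∀ a ∈ u, a ∈ w) → cnt (i, pr) u = 0 := by
    intro i hi pr u hu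
    apply cnt_eq_zero
    intro a ha hax
    have := hall a (hu a ha)
    rw [hax] at this
    simp at this
    omega
  have hgetElem : ∀ m : ℕ, ∀ a : Letter, w[m]? = some a → a.1 = 1 := by
    intro m a hm
    exact hall a (by
      have := List.getElem?_eq_some_iff.1 hm
      obtain ⟨hlt, rfl⟩ := this
      exact List.getElem_mem _)
  intro i hi j
  constructor
  · rintro ⟨-, -, -⟩
    constructor <;> · intro hc
                      have := hgetElem _ _ hc
                      simp at this
                      omega
  · rintro ⟨hj1, hj2, heq⟩
    by_cases hi1 : i = 1
    · exfalso
      subst hi1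
      have h1 : 0 < cnt ((1 : ℕ), false) w := cnt_pos hmem
      have h2 : mStat w 2 j = 0 := by
        unfold mStat
        split
        · exact hval2 2 le_rfl false _ (fun a ha => List.mem_of_mem_drop ha)
        · rw [hval2 2 le_rfl false w (fun a ha => ha),
            hval2 2 le_rfl true _ (fun a ha => List.mem_of_mem_take ha)]
      rw [h2] at heq
      unfold mStat at heq
      split at heq
      · rw [show w.length - j = 0 by omega, List.drop_zero] at heq
        omega
      · omega
    · constructor <;> · intro hc
                        have := hgetElem _ _ hc
                        simp at this
                        omega

lemma canonicalize_of (w : Str) (hall : ∀ a ∈ w, a.1 = 1)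
    (hhead : w.head? = some (1, false)) : canonicalize w = w := by
  obtain ⟨w', rfl⟩ : ∃ w', w = ((1 : ℕ), false) :: w' := by
    cases w with
    | nil => simp at hhead
    | cons a w' =>
      simp only [List.head?_cons, Option.some_inj] at hhead
      exact ⟨w', by rw [hhead]⟩
  apply List.ext_getElem (by simp [canonicalize])
  intro k h1 h2
  simp only [canonicalize, List.getElem_mapIdx]
  have hval : ((((1 : ℕ), false) :: w')[k]).1 = 1 := hall _ (List.getElem_mem _)
  have hfind : List.findIdx (fun b => decide (b.1 = ((((1 : ℕ), false) :: w')[k]).1))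
      ((((1 : ℕ), false) :: w')) = 0 := by
    rw [List.findIdx_cons]
    simp [hval]
  rw [hfind]
  by_cases hk : k = 0
  · subst hk
    simp [hval]
  · simp [hk]

lemma head_unprimed (w : Str) (a : Letter) (hh : w.head? = some a) (ha : a.1 = 1)
    (hc : canonicalize w = w) : a = (1, false) := by
  obtain ⟨w', rfl⟩ : ∃ w', w = a :: w' := by
    cases w with
    | nil => simp at hh
    | cons b w' =>
      simp only [List.head?_cons, Option.some_inj] at hh
      exact ⟨w', by rw [hh]⟩
  have h0 : (canonicalize (a :: w'))[0]? = (a :: w')[0]? := by rw [hc]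
  unfold canonicalize at h0
  rw [List.getElem?_eq_getElem (by simp), List.getElem_mapIdx] at h0
  rw [List.getElem?_eq_getElem (by simp)] at h0
  have h0 := Option.some_inj.1 h0
  have hfind : List.findIdx (fun b => decide (b.1 = ((a :: w')[0]).1)) (a :: w') = 0 := by
    rw [List.findIdx_cons]
    simp
  rw [hfind, if_pos rfl] at h0
  have := congrArg Prod.snd h0
  simp at this
  exact Prod.ext (by simpa using ha) (by simp [← this])
/-- The filling of `skewD t (t+1,t+1)` determined by the sign choices `f`. -/
def Tfill (t : ℕ) (f : Fin t → Bool) : ℕ × ℕ → Letter := fun p =>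
  if p = (t+2, t+2) then (1, false)
  else if p = (t+1, t+2) then (1, true)
  else if h : 1 ≤ p.1 ∧ p.1 ≤ t ∧ p.1 + p.2 = 2*t+3 then (1, f ⟨p.1 - 1, by omega⟩)
  else (0, false)

def Ffam (t : ℕ) (f : Fin t → Bool) : (ℕ × ℕ) × ((ℕ × ℕ) → Letter) :=
  ((t+1, t+1), Tfill t f)

lemma Tfill_corner (t : ℕ) (f : Fin t → Bool) : Tfill t f (t+2, t+2) = (1, false) := by
  simp [Tfill]

lemma Tfill_mid (t : ℕ) (f : Fin t → Bool) : Tfill t f (t+1, t+2) = (1, true) := by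
  rw [Tfill, if_neg (by simp), if_pos rfl]

lemma Tfill_row (t : ℕ) (f : Fin t → Bool) (p : ℕ × ℕ)
    (h : 1 ≤ p.1 ∧ p.1 ≤ t ∧ p.1 + p.2 = 2*t+3) :
    Tfill t f p = (1, f ⟨p.1 - 1, by omega⟩) := by
  rw [Tfill, if_neg (by rw [Prod.ext_iff]; simp; omega),
    if_neg (by rw [Prod.ext_iff]; simp; omega), dif_pos h]

lemma Tfill_fst (t : ℕ) (f : Fin t → Bool) (p : ℕ × ℕ) (hp : p ∈ skewD t (t+1, t+1)) :
    (Tfill t f p).1 = 1 := by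
  rw [mem_D0] at hp
  rcases hp with h | h | h
  · rw [Tfill_row t f p h]
  · have : p = (t+1, t+2) := Prod.ext h.1 h.2
    rw [this, Tfill_mid]
  · have : p = (t+2, t+2) := Prod.ext h.1 h.2
    rw [this, Tfill_corner]

lemma Tfill_junk (t : ℕ) (f : Fin t → Bool) (p : ℕ × ℕ) (hp : p ∉ skewD t (t+1, t+1)) :
    Tfill t f p = (0, false) := by
  rw [mem_D0] at hp
  have h1 : p ≠ (t+2, t+2) := by rintro rfl; exact hp (Or.inr (Or.inr ⟨rfl, rfl⟩))
  have h2 : p ≠ (t+1, t+2) := by rintro rfl; exact hp (Or.inr (Or.inl ⟨rfl, rfl⟩))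
  have h3 : ¬(1 ≤ p.1 ∧ p.1 ≤ t ∧ p.1 + p.2 = 2*t+3) := fun h => hp (Or.inl h)
  rw [Tfill, if_neg h1, if_neg h2, dif_neg h3]

/-- The skew shape for `b = (t+1,t+1)` as a finset. -/
def Dfin (t : ℕ) : Finset (ℕ × ℕ) :=
  ((Finset.Icc 1 t).image fun r => (r, 2*t+3-r)) ∪ {(t+1, t+2), (t+2, t+2)}

lemma coe_Dfin (t : ℕ) : ↑(Dfin t) = skewD t (t+1, t+1) := by
  ext p
  rw [mem_D0]
  simp only [Dfin, Finset.coe_union, Set.mem_union, Finset.coe_image, Set.mem_image,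
    Finset.mem_coe, Finset.mem_Icc, Finset.coe_insert, Set.mem_insert_iff,
    Finset.coe_singleton, Set.mem_singleton_iff, Finset.mem_insert, Finset.mem_singleton]
  constructor
  · rintro (⟨r, ⟨hr1, hr2⟩, rfl⟩ | rfl | rfl)
    · exact Or.inl ⟨hr1, hr2, by simp; omega⟩
    · exact Or.inr (Or.inl ⟨rfl, rfl⟩)
    · exact Or.inr (Or.inr ⟨rfl, rfl⟩)
  · rintro (⟨h1, h2, h3⟩ | ⟨h1, h2⟩ | ⟨h1, h2⟩)
    · exact Or.inl ⟨p.1, ⟨h1, h2⟩, by rw [Prod.ext_iff]; simp; omega⟩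
    · exact Or.inr (Or.inl (Prod.ext h1 h2))
    · exact Or.inr (Or.inr (Prod.ext h1 h2))

lemma card_Dfin (t : ℕ) : (Dfin t).card = t + 2 := by
  rw [Dfin, Finset.card_union_of_disjoint, Finset.card_image_of_injective,
    Nat.card_Icc]
  · simp
  · intro a b hab
    simpa using congrArg Prod.fst hab
  · rw [Finset.disjoint_left]
    rintro p hp hq
    simp only [Finset.mem_image, Finset.mem_Icc] at hp
    obtain ⟨r, ⟨hr1, hr2⟩, rfl⟩ := hp
    simp only [Finset.mem_insert, Finset.mem_singleton, Prod.ext_iff] at hq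
    omega
lemma Ffam_inj (t : ℕ) : Function.Injective (Ffam t) := by
  intro f g hfg
  have hT : Tfill t f = Tfill t g := congrArg Prod.snd hfg
  funext r
  have hcell : 1 ≤ ((r : ℕ) + 1) ∧ ((r : ℕ) + 1) ≤ t ∧ ((r : ℕ) + 1) + (2*t+2-(r : ℕ)) = 2*t+3 := by
    have := r.2; omega
  have h1 := Tfill_row t f (((r : ℕ) + 1), 2*t+2-(r : ℕ)) hcell
  have h2 := Tfill_row t g (((r : ℕ) + 1), 2*t+2-(r : ℕ)) hcell
  rw [hT, h2] at h1
  have h3 := congrArg Prod.snd h1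
  simpa using h3.symm

lemma skew_finite (t : ℕ) (b : ℕ × ℕ) : (skewD t b).Finite := by
  apply Set.Finite.subset (Set.finite_Icc ((1 : ℕ), (1 : ℕ)) (t+2, 2*t+2))
  intro p hp
  rw [mem_skew] at hp
  rw [Set.mem_Icc, Prod.le_def, Prod.le_def]
  constructor
  · constructor <;> omega
  · constructor <;> omega

lemma readWord_head_skew (t : ℕ) (b : ℕ × ℕ) (T : ℕ × ℕ → Letter) (hb : b.1 ≤ t + 1) :
    (readWord (3*t+4) (skewD t b) T).head? = some (T (t+2, t+2)) := by
  apply readWord_head _ _ _ (t+2) (t+2) (by omega) (by omega)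
  · rw [mem_skew]
    refine ⟨Or.inr (Or.inr (Or.inr ⟨rfl, rfl⟩)), ?_⟩
    intro hcon
    have := congrArg Prod.fst hcon
    simp only at this
    omega
  · intro p hp
    rw [mem_skew] at hp
    omega
  · intro p hp hp1
    rw [mem_skew] at hp
    have hp2 : p.2 = t + 2 := by omega
    exact Prod.ext hp1 hp2

/-- Let `t ≥ 1`, `α = (2t+1, 2t-1, …, 5, 3)`,
`β = (t+2)` and `γᶜ = (2t+2, 2t, …, 4, 2, 1)`.  The number of pairs `(b, T)`,
where `b` is a box such that `α ∪ {b}` is the shifted diagram of a strict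
partition contained in `γᶜ`, and `T` is a semistandard filling (in canonical
form, i.e. a tableau) of the shifted skew shape `γᶜ/(α ∪ {b})` of weight `β`
whose reading word is ballot, equals `2^t`.  (A filling is encoded as a
function `ℕ × ℕ → Letter` taking the junk value `(0, false)` off the shape.) -/
theorem schubert_curve_component_count (t : ℕ) (ht : 1 ≤ t) :
    Set.ncard {bT : (ℕ × ℕ) × ((ℕ × ℕ) → Letter) |
      (∃ α' : List ℕ, IsStrictPart α' ∧
        shiftedCells α' = shiftedCells (alphaOf t) ∪ {bT.1} ∧
        shiftedCells α' ⊆ shiftedCells (gammacOf t)) ∧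
      bT.1 ∉ shiftedCells (alphaOf t) ∧
      SemiStandardFilling (skewD t bT.1) bT.2 ∧
      (∀ p, p ∉ skewD t bT.1 → bT.2 p = ((0 : ℕ), false)) ∧
      (∀ p ∈ skewD t bT.1, 1 ≤ (bT.2 p).1) ∧
      Set.ncard {p | p ∈ skewD t bT.1 ∧ (bT.2 p).1 = 1} = t + 2 ∧
      (∀ j, 2 ≤ j → Set.ncard {p | p ∈ skewD t bT.1 ∧ (bT.2 p).1 = j} = 0) ∧
      canonicalize (readWord (3 * t + 4) (skewD t bT.1) bT.2) =
        readWord (3 * t + 4) (skewD t bT.1) bT.2 ∧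
      IsBallot (readWord (3 * t + 4) (skewD t bT.1) bT.2)} = 2 ^ t := by
  have key : {bT : (ℕ × ℕ) × ((ℕ × ℕ) → Letter) |
      (∃ α' : List ℕ, IsStrictPart α' ∧
        shiftedCells α' = shiftedCells (alphaOf t) ∪ {bT.1} ∧
        shiftedCells α' ⊆ shiftedCells (gammacOf t)) ∧
      bT.1 ∉ shiftedCells (alphaOf t) ∧
      SemiStandardFilling (skewD t bT.1) bT.2 ∧
      (∀ p, p ∉ skewD t bT.1 → bT.2 p = ((0 : ℕ), false)) ∧
      (∀ p ∈ skewD t bT.1, 1 ≤ (bT.2 p).1) ∧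
      Set.ncard {p | p ∈ skewD t bT.1 ∧ (bT.2 p).1 = 1} = t + 2 ∧
      (∀ j, 2 ≤ j → Set.ncard {p | p ∈ skewD t bT.1 ∧ (bT.2 p).1 = j} = 0) ∧
      canonicalize (readWord (3 * t + 4) (skewD t bT.1) bT.2) =
        readWord (3 * t + 4) (skewD t bT.1) bT.2 ∧
      IsBallot (readWord (3 * t + 4) (skewD t bT.1) bT.2)} = Set.range (Ffam t) := by
    apply Set.eq_of_subset_of_subset
    · -- the set is contained in the range of `Ffam`
      rintro ⟨b, T⟩ ⟨⟨α', hsp, hcells, hsub⟩, hbna, hssf, hjunk, hval, hcnt1, hcntj,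
        hcanon, hballot⟩
      simp only at hbna hssf hjunk hval hcnt1 hcntj hcanon hballot hcells hsub
      -- Step A : characterize the box b
      have hbin : b ∈ shiftedCells α' := by
        rw [hcells]; exact Set.mem_union_right _ rfl
      simp only [shiftedCells, Set.mem_setOf_eq] at hbin
      have hcorner : ∀ k : ℕ, k + 1 ≤ α'.length → (k+1, k+1) ∈ shiftedCells α' := by
        intro k hk
        simp only [shiftedCells, Set.mem_setOf_eq]
        refine ⟨by omega, hk, le_rfl, ?_⟩
        have hlt : k < α'.length := by omega
        have hg : α'.getD ((k+1, k+1).1 - 1) 0 = α'[k] := by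
          simp only
          rw [show k + 1 - 1 = k by omega, List.getD_eq_getElem _ 0 hlt]
        have hpos := hsp.2 _ (List.getElem_mem hlt)
        simp only [hg]
        omega
      have hbcase : (1 ≤ b.1 ∧ b.1 ≤ t ∧ b.1 + b.2 = 2*t+3) ∨ b = (t+1, t+1) := by
        have hγ := hsub (by
          rw [hcells]; exact Set.mem_union_right _ rfl)
        rw [mem_gammac] at hγ
        rw [mem_alpha] at hbna
        by_cases hb1 : b.1 ≤ t
        · left; omega
        · have hb11 := hcorner t (by omega)
          rw [hcells, Set.mem_union, Set.mem_singleton_iff] at hb11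
          rcases hb11 with h | h
          · rw [mem_alpha] at h
            exfalso
            simp only at h
            omega
          · right; exact h.symm
      -- Step B : all entries on the shape have value 1
      have hfin : (skewD t b).Finite := skew_finite t b
      have hT1 : ∀ p ∈ skewD t b, (T p).1 = 1 := by
        intro p hp
        by_contra hne
        have hge : 2 ≤ (T p).1 := by have := hval p hp; omega
        have h0 := hcntj (T p).1 hge
        rw [Set.ncard_eq_zero (hfin.subset (fun q hq => hq.1))] at h0
        rw [Set.eq_empty_iff_forall_notMem] at h0
        exact h0 p ⟨hp, rfl⟩
      -- Step C : the first letter of the reading word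
      have hb1le : b.1 ≤ t + 1 := by
        rcases hbcase with h | h
        · omega
        · rw [h]
      have hhead := readWord_head_skew t b T hb1le
      have hc22 : (t+2, t+2) ∈ skewD t b := by
        rw [mem_skew]
        refine ⟨Or.inr (Or.inr (Or.inr ⟨rfl, rfl⟩)), ?_⟩
        intro hcon
        have := congrArg Prod.fst hcon
        simp only at this
        omega
      have hTc : T (t+2, t+2) = (1, false) :=
        head_unprimed _ _ hhead (hT1 _ hc22) hcanon
      -- Step D/E : case analysis on the box
      rcases hbcase with hbrow | hbeq
      · exfalso
        have hq1 : (t+1, t+1) ∈ skewD t b := by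
          rw [mem_skew]
          refine ⟨Or.inr (Or.inl ⟨rfl, rfl⟩), ?_⟩
          intro hcon
          have := congrArg Prod.fst hcon
          simp only at this
          omega
        have hq2 : (t+1, t+2) ∈ skewD t b := by
          rw [mem_skew]
          refine ⟨Or.inr (Or.inr (Or.inl ⟨rfl, rfl⟩)), ?_⟩
          intro hcon
          have := congrArg Prod.fst hcon
          simp only at this
          omega
        have hT2 : T (t+1, t+2) = (1, true) := by
          have h1 := hT1 _ hq2
          rcases Bool.eq_false_or_eq_true (T (t+1, t+2)).2 with hb2 | hb2
          · exact Prod.ext h1 hb2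
          · exfalso
            have heq : T (t+1, t+2) = T (t+2, t+2) := by
              rw [hTc]; exact Prod.ext h1 hb2
            exact hssf.2.2.2 (t+1, t+2) (t+2, t+2) hq2 hc22 rfl
              (by intro hcon; rw [Prod.mk.injEq] at hcon; omega) ⟨heq, hb2⟩
        have hT1' : T (t+1, t+1) = (1, true) := by
          have h1 := hT1 _ hq1
          have hle := hssf.1 (t+1, t+1) (t+1, t+2) hq1 hq2 rfl (by omega)
          rw [hT2] at hle
          rcases Bool.eq_false_or_eq_true (T (t+1, t+1)).2 with hb2 | hb2
          · exact Prod.ext h1 hb2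
          · exfalso
            have he2 : encL (T (t+1, t+1)) = 2 := by
              simp [encL, h1, hb2]
            have he1 : encL ((1, true) : Letter) = 1 := by simp [encL]
            omega
        exact hssf.2.2.1 (t+1, t+1) (t+1, t+2) hq1 hq2 rfl
          (by intro hcon; rw [Prod.mk.injEq] at hcon; omega)
          ⟨by rw [hT1', hT2], by rw [hT1']⟩
      · -- b = (t+1, t+1) : reconstruct the sign vector
        subst hbeq
        have hq2 : (t+1, t+2) ∈ skewD t (t+1, t+1) := by
          rw [mem_D0]; exact Or.inr (Or.inl ⟨rfl, rfl⟩)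
        have hT2 : T (t+1, t+2) = (1, true) := by
          have h1 := hT1 _ hq2
          rcases Bool.eq_false_or_eq_true (T (t+1, t+2)).2 with hb2 | hb2
          · exact Prod.ext h1 hb2
          · exfalso
            have heq : T (t+1, t+2) = T (t+2, t+2) := by
              rw [hTc]; exact Prod.ext h1 hb2
            exact hssf.2.2.2 (t+1, t+2) (t+2, t+2) hq2 hc22 rfl
              (by intro hcon; rw [Prod.mk.injEq] at hcon; omega) ⟨heq, hb2⟩
        refine ⟨fun r => (T ((r : ℕ) + 1, 2*t+2 - (r : ℕ))).2, ?_⟩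
        have hTeq : Tfill t (fun r => (T ((r : ℕ) + 1, 2*t+2 - (r : ℕ))).2) = T := by
          funext p
          by_cases hp : p ∈ skewD t (t+1, t+1)
          · have h1 := hT1 p hp
            rw [mem_D0] at hp
            rcases hp with h | h | h
            · rw [Tfill_row _ _ _ h]
              show ((1 : ℕ), (T (p.1 - 1 + 1, 2*t+2 - (p.1 - 1))).2) = T p
              have hpe : ((p.1 - 1 + 1 : ℕ), 2*t+2 - (p.1 - 1)) = p := by
                rw [Prod.mk.injEq]
                constructor
                · omega
                · omega
              rw [hpe, ← h1]
            · have hpe : p = (t+1, t+2) := Prod.ext h.1 h.2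
              rw [hpe, Tfill_mid, hT2]
            · have hpe : p = (t+2, t+2) := Prod.ext h.1 h.2
              rw [hpe, Tfill_corner, hTc]
          · rw [Tfill_junk _ _ _ hp, hjunk p hp]
        rw [Ffam, hTeq]
    · -- the range of `Ffam` is contained in the set
      rintro bT ⟨f, rfl⟩
      simp only [Set.mem_setOf_eq, Ffam]
      have hall : ∀ a ∈ readWord (3*t+4) (skewD t (t+1, t+1)) (Tfill t f), a.1 = 1 := by
        intro a ha
        obtain ⟨p, hp, rfl⟩ := mem_readWord ha
        exact Tfill_fst t f p hp
      have hhead : (readWord (3*t+4) (skewD t (t+1, t+1)) (Tfill t f)).head?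
          = some (1, false) := by
        rw [readWord_head_skew t (t+1, t+1) (Tfill t f) le_rfl, Tfill_corner]
      refine ⟨⟨alphaOf t ++ [1], strictPart_alphaP t, ?_, ?_⟩, ?_, ⟨?_, ?_, ?_, ?_⟩,
        fun p hp => Tfill_junk t f p hp,
        fun p hp => le_of_eq (Tfill_fst t f p hp).symm, ?_, ?_,
        canonicalize_of _ hall hhead, isBallot_of _ hall hhead⟩
      · -- shiftedCells α' = shiftedCells α ∪ {(t+1,t+1)}
        ext p
        rw [mem_alphaP, Set.mem_union, Set.mem_singleton_iff, mem_alpha,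
          show (p = ((t+1 : ℕ), (t+1 : ℕ))) ↔ (p.1 = t+1 ∧ p.2 = t+1) from Prod.ext_iff]
      · -- contained in γᶜ
        intro p hp
        rw [mem_alphaP] at hp
        rw [mem_gammac]
        omega
      · -- (t+1,t+1) ∉ α
        intro h
        rw [mem_alpha] at h
        simp only at h
        omega
      · -- SSF row weak increase : no two cells share a row
        intro p q hp hq h12 hlt
        exfalso
        rw [mem_D0] at hp hq
        omega
      · -- SSF column weak increase
        intro p q hp hq h22 hlt
        rw [mem_D0] at hp hq
        have hp' : p.1 = t+1 ∧ p.2 = t+2 := by omega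
        have hq' : q.1 = t+2 ∧ q.2 = t+2 := by omega
        rw [show p = ((t+1 : ℕ), (t+2 : ℕ)) from Prod.ext hp'.1 hp'.2,
          show q = ((t+2 : ℕ), (t+2 : ℕ)) from Prod.ext hq'.1 hq'.2,
          Tfill_mid, Tfill_corner]
        simp [encL]
      · -- SSF primed row condition
        intro p q hp hq h12 hne
        exfalso
        rw [mem_D0] at hp hq
        have hne' : ¬(p.1 = q.1 ∧ p.2 = q.2) := fun h => hne (Prod.ext h.1 h.2)
        omega
      · -- SSF unprimed column condition
        intro p q hp hq h22 hne
        rw [mem_D0] at hp hq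
        have hne' : ¬(p.1 = q.1 ∧ p.2 = q.2) := fun h => hne (Prod.ext h.1 h.2)
        have hcase : (p.1 = t+1 ∧ p.2 = t+2 ∧ q.1 = t+2 ∧ q.2 = t+2) ∨
            (q.1 = t+1 ∧ q.2 = t+2 ∧ p.1 = t+2 ∧ p.2 = t+2) := by omega
        rcases hcase with h | h
        · rw [show p = ((t+1 : ℕ), (t+2 : ℕ)) from Prod.ext h.1 h.2.1,
            Tfill_mid]
          rintro ⟨-, hcon⟩
          simp at hcon
        · rw [show p = ((t+2 : ℕ), (t+2 : ℕ)) from Prod.ext h.2.2.1 h.2.2.2,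
            show q = ((t+1 : ℕ), (t+2 : ℕ)) from Prod.ext h.1 h.2.1,
            Tfill_mid, Tfill_corner]
          rintro ⟨hcon, -⟩
          simp at hcon
      · -- weight : t + 2 entries of value 1
        have hseteq : {p | p ∈ skewD t (t+1, t+1) ∧ (Tfill t f p).1 = 1}
            = skewD t (t+1, t+1) := by
          ext p
          simp only [Set.mem_setOf_eq, and_iff_left_iff_imp]
          exact fun hp => Tfill_fst t f p hp
        rw [hseteq, ← coe_Dfin, Set.ncard_coe_finset, card_Dfin]
      · -- no entries of value ≥ 2
        intro j hj
        have hseteq : {p | p ∈ skewD t (t+1, t+1) ∧ (Tfill t f p).1 = j} = ∅ := by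
          rw [Set.eq_empty_iff_forall_notMem]
          rintro p ⟨hp, hpj⟩
          rw [Tfill_fst t f p hp] at hpj
          omega
        rw [hseteq, Set.ncard_empty]
  rw [key, ← Set.image_univ, Set.ncard_image_of_injective _ (Ffam_inj t), Set.ncard_univ]
  simp [Nat.card_eq_fintype_card]
end

section
/- Fix an integer d ≥ 1 and let ⟨·,·⟩ be the bilinear form on the space of complex polynomials of degree at most d determined by ⟨z^a, z^b⟩ = 0 if a+b ≠ d and ⟨z^a, z^b⟩ = (−1)^b / C(d,b) if a+b = d (where C(d,b) is the binomial coefficient). Then the osculating flags are orthogonal with respect to this form: for every p ∈ ℂ and all polynomials f, g of degree at most d, if (z−p)^a divides f and (z−p)^b divides g with a+b > d, then ⟨f, g⟩ = 0. -/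
open Polynomial

section OscHelpers
open Finset

/-- Alternating sum identity: `∑ j (-1)^j C(m,j) C(j,r) = 0` for `r < m`. -/
lemma alt_sum_choose (m r : ℕ) (hr : r < m) :
    ∑ j ∈ Finset.range (m + 1), (-1 : ℂ) ^ j * (m.choose j : ℂ) * (j.choose r : ℂ) = 0 := by
  have h1 : ∑ j ∈ Finset.range (m + 1), (-1 : ℂ) ^ j * (m.choose j : ℂ) * (j.choose r : ℂ)
      = ∑ j ∈ Finset.Ico r (m + 1), (-1 : ℂ) ^ j * (m.choose j : ℂ) * (j.choose r : ℂ) := by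
    refine (Finset.sum_subset ?_ ?_).symm
    · intro j hj; simp only [Finset.mem_Ico] at hj; simp [Finset.mem_range]; omega
    · intro j hj hj'
      simp only [Finset.mem_range] at hj
      simp only [Finset.mem_Ico, not_and, not_lt] at hj'
      have : j < r := by omega
      simp [Nat.choose_eq_zero_of_lt this]
  rw [h1, Finset.sum_Ico_eq_sum_range]
  have h2 : ∀ i ∈ Finset.range (m + 1 - r),
      (-1 : ℂ) ^ (r + i) * ((m.choose (r + i) : ℂ)) * (((r + i).choose r : ℂ))
      = ((-1 : ℂ) ^ r * (m.choose r : ℂ)) * ((-1 : ℂ) ^ i * ((m - r).choose i : ℂ)) := by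
    intro i hi
    simp only [Finset.mem_range] at hi
    have hle : r + i ≤ m := by omega
    have := Nat.choose_mul (n := m) (Nat.le_add_right r i)
    have hc : ((m.choose (r + i) : ℂ)) * (((r + i).choose r : ℂ))
        = (m.choose r : ℂ) * ((m - r).choose i : ℂ) := by
      rw [← Nat.cast_mul, ← Nat.cast_mul, this, Nat.add_sub_cancel_left]
    rw [pow_add]
    calc (-1 : ℂ) ^ r * (-1 : ℂ) ^ i * ((m.choose (r + i) : ℂ)) * (((r + i).choose r : ℂ))
        = (-1 : ℂ) ^ r * (-1 : ℂ) ^ i * (((m.choose (r + i) : ℂ)) * (((r + i).choose r : ℂ))) := by ring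
      _ = (-1 : ℂ) ^ r * (-1 : ℂ) ^ i * ((m.choose r : ℂ) * ((m - r).choose i : ℂ)) := by rw [hc]
      _ = ((-1 : ℂ) ^ r * (m.choose r : ℂ)) * ((-1 : ℂ) ^ i * ((m - r).choose i : ℂ)) := by ring
  rw [Finset.sum_congr rfl h2, ← Finset.mul_sum]
  have h3 : ∑ i ∈ Finset.range (m + 1 - r), (-1 : ℂ) ^ i * ((m - r).choose i : ℂ) = 0 := by
    have := Int.alternating_sum_range_choose_of_ne (n := m - r) (by omega)
    have hcast := congrArg (fun z : ℤ => (z : ℂ)) this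
    push_cast at hcast
    rw [show m + 1 - r = m - r + 1 by omega]
    exact_mod_cast hcast
  rw [h3, mul_zero]


/-- The bilinear form on `ℂ[z]_{≤ d}` determined on the monomial basis by
`⟨z^a, z^b⟩ = 0` if `a + b ≠ d` and `⟨z^a, z^b⟩ = (-1)^b / C(d,b)` if
`a + b = d`: explicitly, `⟨f, g⟩ = ∑_{b=0}^{d} f_{d-b} g_b (-1)^b / C(d,b)`. -/
noncomputable def oscForm (d : ℕ) (f g : Polynomial ℂ) : ℂ :=
  ∑ b ∈ Finset.range (d + 1),
    f.coeff (d - b) * g.coeff b * ((-1) ^ b / (d.choose b : ℂ))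

section MainHelpers

lemma osc_pow (d m n : ℕ) (p : ℂ) (hm : m ≤ d) (hn : n ≤ d) (h : d < m + n) :
    oscForm d ((X - C p) ^ m) ((X - C p) ^ n) = 0 := by
  have hX : (X - C p : Polynomial ℂ) = X + C (-p) := by rw [map_neg]; ring
  unfold oscForm
  simp only [hX, coeff_X_add_C_pow]
  have step2 : ∀ k ∈ Finset.range (d + 1),
      (-p) ^ (m - (d - k)) * (m.choose (d - k) : ℂ) * ((-p) ^ (n - k) * (n.choose k : ℂ))
        * ((-1) ^ k / (d.choose k : ℂ))
      = (-p) ^ (m + n - d) *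
        ((-1 : ℂ) ^ k * (m.choose (d - k) : ℂ) * (n.choose k : ℂ) / (d.choose k : ℂ)) := by
    intro k hk
    simp only [Finset.mem_range] at hk
    by_cases h1 : m < d - k
    · simp [Nat.choose_eq_zero_of_lt h1]
    by_cases h2 : n < k
    · simp [Nat.choose_eq_zero_of_lt h2]
    push_neg at h1 h2
    have hpow : (-p) ^ (m - (d - k)) * (-p) ^ (n - k) = (-p) ^ (m + n - d) := by
      rw [← pow_add]; congr 1; omega
    calc (-p) ^ (m - (d - k)) * (m.choose (d - k) : ℂ) * ((-p) ^ (n - k) * (n.choose k : ℂ))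
          * ((-1) ^ k / (d.choose k : ℂ))
        = ((-p) ^ (m - (d - k)) * (-p) ^ (n - k)) *
          ((-1 : ℂ) ^ k * (m.choose (d - k) : ℂ) * (n.choose k : ℂ) / (d.choose k : ℂ)) := by
          ring
      _ = _ := by rw [hpow]
  rw [Finset.sum_congr rfl step2, ← Finset.mul_sum]
  have U0 : ∑ k ∈ Finset.range (d + 1),
      (-1 : ℂ) ^ k * (m.choose (d - k) : ℂ) * (n.choose k : ℂ) / (d.choose k : ℂ) = 0 := by
    rw [← Finset.sum_range_reflect]
    have step4 : ∀ j ∈ Finset.range (d + 1),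
        (-1 : ℂ) ^ (d + 1 - 1 - j) * (m.choose (d - (d + 1 - 1 - j)) : ℂ)
          * (n.choose (d + 1 - 1 - j) : ℂ) / (d.choose (d + 1 - 1 - j) : ℂ)
        = ((-1 : ℂ) ^ d / (d.choose n : ℂ)) *
          ((-1 : ℂ) ^ j * (m.choose j : ℂ) * (j.choose (d - n) : ℂ)) := by
      intro j hj
      simp only [Finset.mem_range] at hj
      have hj' : j ≤ d := by omega
      have e1 : d + 1 - 1 - j = d - j := by omega
      have e2 : d - (d - j) = j := by omega
      rw [e1, e2]
      have hsgn : (-1 : ℂ) ^ (d - j) = (-1 : ℂ) ^ d * (-1 : ℂ) ^ j := by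
        have h4 : (-1 : ℂ) ^ (d - j) * (-1 : ℂ) ^ j = (-1 : ℂ) ^ d := by
          rw [← pow_add]; congr 1; omega
        have hj2 : ((-1 : ℂ) ^ j) * ((-1 : ℂ) ^ j) = 1 := by
          rw [← pow_add, show j + j = 2 * j by ring, pow_mul]; norm_num
        calc (-1 : ℂ) ^ (d - j) = (-1 : ℂ) ^ (d - j) * (((-1 : ℂ) ^ j) * ((-1 : ℂ) ^ j)) := by
              rw [hj2, mul_one]
          _ = ((-1 : ℂ) ^ (d - j) * (-1 : ℂ) ^ j) * (-1 : ℂ) ^ j := by ring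
          _ = (-1 : ℂ) ^ d * (-1 : ℂ) ^ j := by rw [h4]
      rw [hsgn]
      by_cases hcase : j < d - n
      · have c1 : n < d - j := by omega
        simp [Nat.choose_eq_zero_of_lt c1, Nat.choose_eq_zero_of_lt hcase]
      push_neg at hcase
      have hdj : d - j ≤ n := by omega
      have key : d.choose n * n.choose (d - j) = d.choose j * j.choose (d - n) := by
        rw [Nat.choose_mul (n := d) hdj, e2, show n - (d - j) = j - (d - n) by omega,
          Nat.choose_symm hcase, Nat.choose_symm hj']
      have hdn0 : (d.choose n : ℂ) ≠ 0 := by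
        exact_mod_cast (Nat.choose_pos hn).ne'
      have hdj1 : (d.choose j : ℂ) ≠ 0 := by
        exact_mod_cast (Nat.choose_pos hj').ne'
      have hchoose_symm : d.choose (d - j) = d.choose j := Nat.choose_symm hj'
      rw [hchoose_symm]
      have hratio : (n.choose (d - j) : ℂ) / (d.choose j : ℂ)
          = (j.choose (d - n) : ℂ) / (d.choose n : ℂ) := by
        rw [div_eq_div_iff hdj1 hdn0]
        have := congrArg (fun x : ℕ => (x : ℂ)) key
        push_cast at this
        linear_combination this
      rw [mul_div_assoc, hratio]
      ring
    rw [Finset.sum_congr rfl step4, ← Finset.mul_sum]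
    have halt : ∑ j ∈ Finset.range (d + 1),
        (-1 : ℂ) ^ j * (m.choose j : ℂ) * (j.choose (d - n) : ℂ) = 0 := by
      rw [← Finset.sum_subset (Finset.range_subset_range.mpr (by omega : m + 1 ≤ d + 1))
        (fun j hj hj' => by
          simp only [Finset.mem_range, not_lt] at hj hj'
          simp [Nat.choose_eq_zero_of_lt (by omega : m < j)])]
      exact alt_sum_choose m (d - n) (by omega)
    rw [halt, mul_zero]
  rw [U0, mul_zero]

lemma osc_expand (d : ℕ) (s t : Finset ℕ) (u v : ℕ → ℂ) (q r : ℕ → Polynomial ℂ) :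
    oscForm d (∑ i ∈ s, C (u i) * q i) (∑ j ∈ t, C (v j) * r j)
      = ∑ i ∈ s, ∑ j ∈ t, u i * v j * oscForm d (q i) (r j) := by
  unfold oscForm
  simp only [finset_sum_coeff, coeff_C_mul, Finset.sum_mul, Finset.mul_sum]
  rw [Finset.sum_comm]
  rw [Finset.sum_congr rfl fun j _ => Finset.sum_comm]
  rw [Finset.sum_comm]
  exact Finset.sum_congr rfl fun i _ => Finset.sum_congr rfl fun j _ =>
    Finset.sum_congr rfl fun b _ => by ring

lemma taylor_rep (d : ℕ) (p : ℂ) (h : Polynomial ℂ) (hh : h.degree ≤ d) :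
    h = ∑ i ∈ Finset.range (d + 1), C ((taylor p h).coeff i) * (X - C p) ^ i := by
  conv_lhs => rw [← sum_taylor_eq h p]
  rw [Polynomial.sum]
  have hsupp : (taylor p h).support ⊆ Finset.range (d + 1) := by
    intro i hi
    simp only [Finset.mem_range]
    have h1 : i ≤ (taylor p h).natDegree := le_natDegree_of_mem_supp i hi
    rw [natDegree_taylor] at h1
    have h2 : h.natDegree ≤ d := natDegree_le_iff_degree_le.mpr hh
    omega
  refine Finset.sum_subset hsupp fun i _ hi => ?_
  rw [notMem_support_iff.mp hi, map_zero, zero_mul]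

lemma taylor_vanish (p : ℂ) (h : Polynomial ℂ) (c : ℕ) (hdvd : (X - C p) ^ c ∣ h) :
    ∀ i < c, (taylor p h).coeff i = 0 := by
  obtain ⟨u, rfl⟩ := hdvd
  have htX : taylor p (X - C p : Polynomial ℂ) = X := by
    rw [map_sub, taylor_X, taylor_C]; ring
  have hXc : ∀ k : ℕ, taylor p ((X - C p) ^ k : Polynomial ℂ) = X ^ k := by
    intro k
    induction k with
    | zero => simp
    | succ k ih => rw [pow_succ, pow_succ, taylor_mul, ih, htX]
  intro i hi
  rw [taylor_mul, hXc]
  exact X_pow_dvd_iff.mp ⟨taylor p u, rfl⟩ i hi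


end MainHelpers
end OscHelpers

/-- Fix `d ≥ 1` and let `⟨·,·⟩` be the bilinear form above
on polynomials of degree at most `d`.  Then the osculating flags are
orthogonal with respect to this form: for every `p ∈ ℂ` and all polynomials
`f, g` of degree at most `d`, if `(z - p)^a ∣ f` and `(z - p)^b ∣ g` with
`a + b > d`, then `⟨f, g⟩ = 0`. -/
theorem osculating_flags_orthogonal (d : ℕ) (hd : 1 ≤ d) (p : ℂ)
    (f g : Polynomial ℂ) (hf : f.degree ≤ d) (hg : g.degree ≤ d)
    (a b : ℕ) (hab : d < a + b)
    (hfa : (X - C p) ^ a ∣ f) (hgb : (X - C p) ^ b ∣ g) :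
    oscForm d f g = 0 := by
  rw [taylor_rep d p f hf, taylor_rep d p g hg, osc_expand]
  refine Finset.sum_eq_zero fun i hi => Finset.sum_eq_zero fun j hj => ?_
  simp only [Finset.mem_range] at hi hj
  by_cases hci : (taylor p f).coeff i = 0
  · rw [hci]; ring
  by_cases hcj : (taylor p g).coeff j = 0
  · rw [hcj]; ring
  have hia : a ≤ i := by
    by_contra hlt
    exact hci (taylor_vanish p f a hfa i (by omega))
  have hjb : b ≤ j := by
    by_contra hlt
    exact hcj (taylor_vanish p g b hgb j (by omega))
  rw [osc_pow d i j p (by omega) (by omega) (by omega), mul_zero]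
end
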